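/- arXiv:1510.00279 — 10 statements merged into one kernel-verified Lean document; each statement's English description precedes it below -/
import Mathlib

section
/- Let x = x₁x₂x₃… be an infinite word over a finite alphabet. The following three statements are equivalent: (i) x is eventually periodic; (ii) r(n,x) ≤ 2n for all sufficiently large integers n; (iii) there exists a constant M such that r(n,x) − n ≤ M for every n ≥ 1. -/
open Filter

/-- `rc n x` : length of the shortest prefix of the infinite word `x` containing two
(possibly overlapping) occurrences of some word of length `n`.  Here `x k` is the
`(k+1)`-st letter of the word, so an occurrence of a length-`n` word at (1-based)
position `i` corresponds to the 0-based starting index `i - 1`. -/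
noncomputable def rc {A : Type*} (n : ℕ) (x : ℕ → A) : ℕ :=
  sInf {m | ∃ j, j + n < m ∧ ∀ t < n, x (j + t) = x (m - n + t)}

/-- subword complexity: the number of distinct factors of length `n` of `x` -/
noncomputable def pc {A : Type*} (n : ℕ) (x : ℕ → A) : ℕ :=
  Set.ncard {w : Fin n → A | ∃ k, ∀ t : Fin n, w t = x (k + t.1)}

def EventuallyPeriodic {A : Type*} (x : ℕ → A) : Prop :=
  ∃ p > 0, ∃ N, ∀ n ≥ N, x (n + p) = x n

def IsSturmian {A : Type*} (x : ℕ → A) : Prop := ∀ n ≥ 1, pc n x = n + 1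

/-- exponent of repetition: `liminf r(n,x)/n` -/
noncomputable def repExp {A : Type*} (x : ℕ → A) : EReal :=
  Filter.atTop.liminf fun n => (((rc n x : ℝ) / (n : ℝ) : ℝ) : EReal)

/-- Transport along a `g`-periodicity valid on `[s, T]`. -/
private lemma steps_lemma {A : Type*} (x : ℕ → A) (g s T : ℕ)
    (hg : ∀ k, s ≤ k → k + g ≤ T → x (k + g) = x k) :
    ∀ d u v, s ≤ u → v ≤ T → v = u + g * d → x v = x u := by
  intro d
  induction d with
  | zero =>
    intro u v _ _ h
    simp at h
    rw [h]
  | succ d ih =>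
    intro u v hu hv hveq
    have h1 : v = (u + g * d) + g := by rw [hveq]; ring
    have h2 : x v = x (u + g * d) := by
      rw [h1]; exact hg (u + g * d) (by omega) (by omega)
    exact h2.trans (ih u (u + g * d) hu (by omega) rfl)

/-- Fine and Wilf's periodicity lemma, interval version: if `x` has period `p` and period `q`
on the (k-condition) range `[s, t]` and the length is at least `p + q - gcd p q`, then `x`
has period `gcd p q` there. -/
private lemma fine_wilf {A : Type*} (x : ℕ → A) :
    ∀ q p s t, 0 < p → p ≤ q →
      (∀ k, s ≤ k → k + p ≤ t → x (k + p) = x k) →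
      (∀ k, s ≤ k → k + q ≤ t → x (k + q) = x k) →
      s + p + q ≤ t + 1 + Nat.gcd p q →
      ∀ k, s ≤ k → k + Nat.gcd p q ≤ t → x (k + Nat.gcd p q) = x k := by
  intro q
  induction q using Nat.strong_induction_on with
  | _ q ih =>
  intro p s t hp hpq hper hqer hlen k hk hkt
  rcases eq_or_lt_of_le hpq with heq | hlt
  · rw [← heq, Nat.gcd_self] at hkt ⊢
    exact hper k hk hkt
  · have hgp : Nat.gcd p q ∣ p := Nat.gcd_dvd_left p q
    have hgq : Nat.gcd p q ∣ q := Nat.gcd_dvd_right p q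
    have hg0 : 0 < Nat.gcd p q := Nat.gcd_pos_of_pos_left q hp
    have hgle : Nat.gcd p q ≤ p := Nat.le_of_dvd hp hgp
    have hdvdsub : Nat.gcd p q ∣ q - p := Nat.dvd_sub hgq hgp
    have hqpg : p + Nat.gcd p q ≤ q := by
      have := Nat.le_of_dvd (by omega) hdvdsub
      omega
    have htp : p ≤ t := by omega
    have hq20 : 0 < q - p := by omega
    have hper' : ∀ k, s ≤ k → k + p ≤ t - p → x (k + p) = x k :=
      fun k hk h => hper k hk (by omega)
    have hq2er : ∀ k, s ≤ k → k + (q - p) ≤ t - p → x (k + (q - p)) = x k := by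
      intro k hk h
      have h1 : x (k + q) = x k := hqer k hk (by omega)
      have h2 : x ((k + (q - p)) + p) = x (k + (q - p)) :=
        hper (k + (q - p)) (by omega) (by omega)
      have h3 : (k + (q - p)) + p = k + q := by omega
      rw [h3] at h2
      rw [← h2, h1]
    have hq2g : Nat.gcd p (q - p) = Nat.gcd p q := by
      apply Nat.dvd_antisymm
      · refine Nat.dvd_gcd (Nat.gcd_dvd_left _ _) ?_
        have h1 := Nat.gcd_dvd_left p (q - p)
        have h2 := Nat.gcd_dvd_right p (q - p)
        have h4 : Nat.gcd p (q - p) ∣ (q - p) + p := Nat.dvd_add h2 h1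
        rwa [show (q - p) + p = q by omega] at h4
      · exact Nat.dvd_gcd hgp hdvdsub
    have hgmid : ∀ k, s ≤ k → k + Nat.gcd p q ≤ t - p → x (k + Nat.gcd p q) = x k := by
      rcases le_total p (q - p) with hmin | hmin
      · have hrec := ih (q - p) (by omega) p s (t - p) hp hmin hper' hq2er
          (by rw [hq2g]; omega)
        rw [hq2g] at hrec
        exact hrec
      · have hrec := ih p hlt (q - p) s (t - p) hq20 hmin hq2er hper'
          (by rw [Nat.gcd_comm (q - p) p, hq2g]; omega)
        rw [Nat.gcd_comm (q - p) p, hq2g] at hrec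
        exact hrec
    by_cases hcase : k + Nat.gcd p q ≤ t - p
    · exact hgmid k hk hcase
    · push_neg at hcase
      have hklow : s + p - Nat.gcd p q ≤ k := by omega
      by_cases hsp : s + p ≤ k
      · have e1 : x (k + Nat.gcd p q) = x (k + Nat.gcd p q - p) := by
          have := hper (k + Nat.gcd p q - p) (by omega) (by omega)
          rw [show k + Nat.gcd p q - p + p = k + Nat.gcd p q by omega] at this
          exact this
        have e2 : x ((k - p) + Nat.gcd p q) = x (k - p) := hgmid (k - p) (by omega) (by omega)
        have e3 : x k = x (k - p) := by
          have := hper (k - p) (by omega) (by omega)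
          rw [show k - p + p = k by omega] at this
          exact this
        rw [e1, show k + Nat.gcd p q - p = (k - p) + Nat.gcd p q by omega, e2, ← e3]
      · push_neg at hsp
        have hkt' : k ≤ t - p := by omega
        have e1 : x (k + Nat.gcd p q) = x (k + Nat.gcd p q - p) := by
          have := hper (k + Nat.gcd p q - p) (by omega) (by omega)
          rw [show k + Nat.gcd p q - p + p = k + Nat.gcd p q by omega] at this
          exact this
        obtain ⟨d, hd⟩ := Nat.dvd_sub hgp (dvd_refl (Nat.gcd p q))
        have e2 : x k = x (k + Nat.gcd p q - p) :=
          steps_lemma x (Nat.gcd p q) s (t - p) hgmid d (k + Nat.gcd p q - p) k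
            (by omega) hkt' (by omega)
        exact e1.trans e2.symm

theorem periodic_iff_rc {A : Type*} [Fintype A] (x : ℕ → A) :
    (EventuallyPeriodic x ↔ ∃ N, ∀ n ≥ N, rc n x ≤ 2 * n) ∧
    (EventuallyPeriodic x ↔ ∃ M, ∀ n ≥ 1, rc n x - n ≤ M) := by
  classical
  have hrc_le : ∀ n m : ℕ, (∃ j, j + n < m ∧ ∀ t < n, x (j + t) = x (m - n + t)) →
      rc n x ≤ m := fun n m h => Nat.sInf_le h
  have hne : ∀ n : ℕ,
      ({m | ∃ j, j + n < m ∧ ∀ t < n, x (j + t) = x (m - n + t)} : Set ℕ).Nonempty := by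
    intro n
    obtain ⟨i, i', hne', heq⟩ := Fintype.exists_ne_map_eq_of_card_lt
      (fun i : Fin (Fintype.card (Fin n → A) + 1) => (fun t : Fin n => x (i.1 + t.1)))
      (by rw [Fintype.card_fin]; exact Nat.lt_succ_self _)
    have hvne : i.1 ≠ i'.1 := fun hh => hne' (Fin.ext hh)
    rcases Nat.lt_or_ge i.1 i'.1 with h | h
    · refine ⟨i'.1 + n, i.1, by omega, fun t ht => ?_⟩
      rw [Nat.add_sub_cancel]
      exact congrFun heq ⟨t, ht⟩
    · have h' : i'.1 < i.1 := by omega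
      refine ⟨i.1 + n, i'.1, by omega, fun t ht => ?_⟩
      rw [Nat.add_sub_cancel]
      exact (congrFun heq ⟨t, ht⟩).symm
  have hmem : ∀ n : ℕ, ∃ j, j + n < rc n x ∧ ∀ t < n, x (j + t) = x (rc n x - n + t) := by
    intro n
    exact Nat.sInf_mem (hne n)
  have hmono : ∀ n, rc n x + 1 ≤ rc (n + 1) x := by
    intro n
    obtain ⟨j, hj, hw⟩ := hmem (n + 1)
    have h1 : rc n x ≤ rc (n + 1) x - 1 := by
      apply hrc_le
      refine ⟨j, by omega, fun t ht => ?_⟩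
      rw [show rc (n + 1) x - 1 - n = rc (n + 1) x - (n + 1) by omega]
      exact hw t (by omega)
    omega
  have hchain : ∀ m n, m ≤ n → rc m x + (n - m) ≤ rc n x := by
    intro m n h
    induction n, h using Nat.le_induction with
    | base => omega
    | succ n hmn ihn => have := hmono n; omega
  have hAC : EventuallyPeriodic x → ∃ M, ∀ n ≥ 1, rc n x - n ≤ M := by
    rintro ⟨p, hp, K, hper⟩
    refine ⟨K + p, fun n _ => ?_⟩
    have h1 : rc n x ≤ n + (K + p) := by
      apply hrc_le
      refine ⟨K, by omega, fun t ht => ?_⟩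
      rw [show n + (K + p) - n + t = (K + t) + p by omega]
      exact (hper (K + t) (by omega)).symm
    omega
  have hCB : (∃ M, ∀ n ≥ 1, rc n x - n ≤ M) → ∃ N, ∀ n ≥ N, rc n x ≤ 2 * n := by
    rintro ⟨M, hM⟩
    exact ⟨M + 1, fun n hn => by have := hM n (by omega); omega⟩
  have hBA : (∃ N, ∀ n ≥ N, rc n x ≤ 2 * n) → EventuallyPeriodic x := by
    rintro ⟨N, hN⟩
    by_contra hnp
    have hNP : ∀ p, 0 < p → ∀ K, ∃ k, K ≤ k ∧ x (k + p) ≠ x k := by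
      intro p hp K
      by_contra hcon
      push_neg at hcon
      exact hnp ⟨p, hp, K, fun k hk => hcon k hk⟩
    have main : ∀ a p m, 0 < p → N ≤ m → rc m x = m + (a + p) →
        (∀ k, a ≤ k → k < a + m → x (k + p) = x k) → False := by
      intro a
      induction a using Nat.strong_induction_on with
      | _ a ih =>
      intro p m hp hmN hrcm hper
      have hapm : a + p ≤ m := by have := hN m hmN; omega
      have hEne : {k | a ≤ k ∧ x (k + p) ≠ x k}.Nonempty := by
        obtain ⟨k, h1, h2⟩ := hNP p hp a
        exact ⟨k, h1, h2⟩
      set E := sInf {k | a ≤ k ∧ x (k + p) ≠ x k} with hEdef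
      have hEspec : a ≤ E ∧ x (E + p) ≠ x E := Nat.sInf_mem hEne
      obtain ⟨hEa, hEmis⟩ := hEspec
      have hEmin : ∀ k, a ≤ k → k < E → x (k + p) = x k := by
        intro k hka hkE
        by_contra hne'
        have hle := Nat.sInf_le (show k ∈ {k | a ≤ k ∧ x (k + p) ≠ x k} from ⟨hka, hne'⟩)
        rw [← hEdef] at hle
        omega
      have hEm : a + m ≤ E := by
        by_contra hcon
        exact hEmis (hper E hEa (by omega))
      obtain ⟨j, hj, hw⟩ := hmem (E - a + 1)
      have hrcn1 : rc (E - a + 1) x ≤ 2 * (E - a + 1) := hN (E - a + 1) (by omega)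
      set n1 := E - a + 1 with hn1def
      set p' := rc n1 x - n1 - j with hp'def
      have hmm : rc n1 x = n1 + (j + p') := by omega
      have hp'0 : 0 < p' := by omega
      have hjp' : j + p' ≤ n1 := by omega
      have hper' : ∀ k, j ≤ k → k < j + n1 → x (k + p') = x k := by
        intro k hkj hkn
        have h2 := hw (k - j) (by omega)
        rw [show j + (k - j) = k by omega,
          show rc n1 x - n1 + (k - j) = k + p' by omega] at h2
        exact h2.symm
      by_cases hja : j < a
      · exact ih j hja p' n1 hp'0 (by omega) hmm hper'
      · push_neg at hja
        have hE'ne : {k | j ≤ k ∧ x (k + p') ≠ x k}.Nonempty := by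
          obtain ⟨k, h1, h2⟩ := hNP p' hp'0 j
          exact ⟨k, h1, h2⟩
        set E' := sInf {k | j ≤ k ∧ x (k + p') ≠ x k} with hE'def
        have hE'spec : j ≤ E' ∧ x (E' + p') ≠ x E' := Nat.sInf_mem hE'ne
        obtain ⟨hE'j, hE'mis⟩ := hE'spec
        have hE'min : ∀ k, j ≤ k → k < E' → x (k + p') = x k := by
          intro k hkj hkE
          by_contra hne'
          have hle := Nat.sInf_le (show k ∈ {k | j ≤ k ∧ x (k + p') ≠ x k} from ⟨hkj, hne'⟩)
          rw [← hE'def] at hle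
          omega
        have hE'n : j + n1 ≤ E' := by
          by_contra hcon
          exact hE'mis (hper' E' hE'j (by omega))
        have hpE : p ≤ E - a := by omega
        have hgp : Nat.gcd p p' ∣ p := Nat.gcd_dvd_left p p'
        have hgp' : Nat.gcd p p' ∣ p' := Nat.gcd_dvd_right p p'
        have hg0 : 0 < Nat.gcd p p' := Nat.gcd_pos_of_pos_left p' hp
        have key : ∀ T, (∀ k, j ≤ k → k + p ≤ T → x (k + p) = x k) →
            (∀ k, j ≤ k → k + p' ≤ T → x (k + p') = x k) →
            j + p + p' ≤ T + 1 + Nat.gcd p p' →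
            ∀ u v, j ≤ u → u ≤ v → v ≤ T → Nat.gcd p p' ∣ v - u → x v = x u := by
          intro T h1 h2 h3 u v hu huv hv hdvd
          have hgmain : ∀ k, j ≤ k → k + Nat.gcd p p' ≤ T → x (k + Nat.gcd p p') = x k := by
            rcases le_total p p' with hmin | hmin
            · exact fine_wilf x p' p j T hp hmin h1 h2 (by omega)
            · have hcomm : Nat.gcd p' p = Nat.gcd p p' := Nat.gcd_comm p' p
              have hres := fine_wilf x p p' j T hp'0 hmin h2 h1 (by rw [hcomm]; omega)
              rw [hcomm] at hres
              exact hres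
          obtain ⟨d, hd⟩ := hdvd
          exact steps_lemma x (Nat.gcd p p') j T hgmain d u v hu hv (by omega)
        rcases lt_trichotomy (E + p) (E' + p') with hA | hG | hB
        · -- case α : the two periodic windows end with E + p < E' + p'
          have hPer1 : ∀ k, j ≤ k → k + p ≤ E + p - 1 → x (k + p) = x k :=
            fun k h1 h2 => hEmin k (by omega) (by omega)
          have hPer2 : ∀ k, j ≤ k → k + p' ≤ E + p - 1 → x (k + p') = x k :=
            fun k h1 h2 => hE'min k h1 (by omega)
          have hlen : j + p + p' ≤ (E + p - 1) + 1 + Nat.gcd p p' := by omega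
          have e1 : x (E + p) = x (E + p - p') := by
            have := hE'min (E + p - p') (by omega) (by omega)
            rw [show E + p - p' + p' = E + p by omega] at this
            exact this
          have efin : x (E + p) = x E := by
            rcases le_total E (E + p - p') with h | h
            · have hstep := key (E + p - 1) hPer1 hPer2 hlen E (E + p - p') (by omega) h
                (by omega)
                (by rw [show E + p - p' - E = p - p' by omega]; exact Nat.dvd_sub hgp hgp')
              exact e1.trans hstep
            · have hstep := key (E + p - 1) hPer1 hPer2 hlen (E + p - p') E (by omega) h
                (by omega)
                (by rw [show E - (E + p - p') = p' - p by omega]; exact Nat.dvd_sub hgp' hgp)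
              exact e1.trans hstep.symm
          exact hEmis efin
        · -- case γ : alignment E + p = E' + p' contradicts minimality/monotonicity of rc
          have h1 : j + p' + 1 ≤ a + p := by omega
          have h2 := hchain m n1 (by omega)
          omega
        · -- case β : E' + p' < E + p
          have hPer1 : ∀ k, j ≤ k → k + p ≤ E' + p' - 1 → x (k + p) = x k :=
            fun k h1 h2 => hEmin k (by omega) (by omega)
          have hPer2 : ∀ k, j ≤ k → k + p' ≤ E' + p' - 1 → x (k + p') = x k :=
            fun k h1 h2 => hE'min k h1 (by omega)
          have hlen : j + p + p' ≤ (E' + p' - 1) + 1 + Nat.gcd p p' := by omega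
          have e1 : x (E' + p') = x (E' + p' - p) := by
            have := hEmin (E' + p' - p) (by omega) (by omega)
            rw [show E' + p' - p + p = E' + p' by omega] at this
            exact this
          have efin : x (E' + p') = x E' := by
            rcases le_total E' (E' + p' - p) with h | h
            · have hstep := key (E' + p' - 1) hPer1 hPer2 hlen E' (E' + p' - p) hE'j h
                (by omega)
                (by rw [show E' + p' - p - E' = p' - p by omega]; exact Nat.dvd_sub hgp' hgp)
              exact e1.trans hstep
            · have hstep := key (E' + p' - 1) hPer1 hPer2 hlen (E' + p' - p) E' (by omega) h
                (by omega)
                (by rw [show E' - (E' + p' - p) = p - p' by omega]; exact Nat.dvd_sub hgp hgp')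
              exact e1.trans hstep.symm
          exact hE'mis efin
    obtain ⟨j0, hj0, hw0⟩ := hmem N
    have hrcN : rc N x ≤ 2 * N := hN N le_rfl
    set p0 := rc N x - N - j0 with hp0def
    have hmm0 : rc N x = N + (j0 + p0) := by omega
    have hp00 : 0 < p0 := by omega
    have hper0 : ∀ k, j0 ≤ k → k < j0 + N → x (k + p0) = x k := by
      intro k hk1 hk2
      have h2 := hw0 (k - j0) (by omega)
      rw [show j0 + (k - j0) = k by omega,
        show rc N x - N + (k - j0) = k + p0 by omega] at h2
      exact h2.symm
    exact main j0 p0 N hp00 le_rfl hmm0 hper0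
  exact ⟨⟨fun h => hCB (hAC h), hBA⟩, ⟨hAC, fun h => hBA (hCB h)⟩⟩
end

section
/- Let x = x₁x₂x₃… be an infinite word over a finite alphabet. Then x is a Sturmian word if and only if r(n,x) ≤ 2n + 1 for every n ≥ 1 and r(n,x) = 2n + 1 for infinitely many n. -/
/-!
Let `s(n) = firstRepeat x n` be the start of the first repeated factor of length `n`, so that
`r(n, x) = s(n) + n`, and `s(n) ≤ p(n, x)` by pigeonhole.

The key step: if a factor of length `ν` first occurs at `q ≥ s(ν)`, let `μ ≥ ν` be the last scale
whose repeated window `[s(μ), s(μ) + μ)` ends before `q + ν`. The window at scale `μ + 1` reaches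
`q + ν`, so it starts after `q`: otherwise it would contain `[q, q + ν)`, and its earlier copy an
earlier occurrence of the factor at `q`.

If `p(n) ≥ n + 1` and `s(ν) ≤ ν`, some factor of length `ν` first occurs beyond `ν`, and the key
step turns `s(μ) + d ≤ μ` for all `μ ≥ ν` into `s(ν) + d + 1 ≤ ν`; hence `s(n) ≤ n` cannot hold for
all large `n`. Conversely, if `s(n) ≤ n + 1` everywhere and `s(ν) = ν + 1`, the key step shows that
every factor of length `ν` occurs at a position `≤ ν`, so `p(ν) ≤ ν + 1`. Unbounded `s` rules out
eventual periodicity, so `p` is strictly increasing by Morse–Hedlund, and with `p(0) = 1` this pins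
`p(n) = n + 1` for `n ≤ ν`.
-/

open Filter

namespace InfiniteWord

variable {A : Type*}

def factor (x : ℕ → A) (n k : ℕ) : Fin n → A := fun t => x (k + t)

def repeatStarts (x : ℕ → A) (n : ℕ) : Set ℕ := {k | ∃ j < k, factor x n j = factor x n k}

noncomputable def firstRepeat (x : ℕ → A) (n : ℕ) : ℕ := sInf (repeatStarts x n)

variable {x : ℕ → A}

lemma factor_eq_factor_iff {n j k : ℕ} :
    factor x n j = factor x n k ↔ ∀ t < n, x (j + t) = x (k + t) :=
  ⟨fun h t ht => congrFun h ⟨t, ht⟩, fun h => funext fun t => h t t.2⟩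

lemma tail_factor (n k : ℕ) : Fin.tail (factor x (n + 1) k) = factor x n (k + 1) := by
  funext t
  simp only [Fin.tail, factor, Fin.val_succ]
  congr 1
  omega

lemma pc_eq_ncard_range (n : ℕ) : pc n x = (Set.range (factor x n)).ncard := by
  unfold pc
  congr 1
  ext w
  simp only [Set.mem_range, funext_iff, factor, eq_comm]
  rfl

lemma pc_zero : pc 0 x = 1 := by
  rw [pc_eq_ncard_range, Set.ncard_eq_one]
  exact ⟨factor x 0 0,
    Set.eq_singleton_iff_unique_mem.2 ⟨⟨0, rfl⟩, fun _ _ => Subsingleton.elim _ _⟩⟩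

lemma _root_.IsSturmian.pc_eq (h : IsSturmian x) (n : ℕ) : pc n x = n + 1 := by
  rcases n with _ | n
  · exact pc_zero
  · exact h _ n.succ_pos

lemma factor_injOn_compl_repeatStarts (n : ℕ) : Set.InjOn (factor x n) (repeatStarts x n)ᶜ := by
  intro i hi j hj hij
  by_contra hne
  rcases Nat.lt_or_gt_of_ne hne with h | h
  · exact hj ⟨i, h, hij⟩
  · exact hi ⟨j, h, hij.symm⟩

lemma image_compl_repeatStarts (n : ℕ) :
    factor x n '' (repeatStarts x n)ᶜ = Set.range (factor x n) := by
  classical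
  refine (Set.image_subset_range _ _).antisymm ?_
  rintro _ ⟨k, rfl⟩
  have hex : ∃ i, factor x n i = factor x n k := ⟨k, rfl⟩
  exact ⟨Nat.find hex, fun ⟨j, hj, hjk⟩ => Nat.find_min hex hj (hjk.trans (Nat.find_spec hex)),
    Nat.find_spec hex⟩

lemma pc_eq_ncard_compl_repeatStarts (n : ℕ) : pc n x = (repeatStarts x n)ᶜ.ncard := by
  rw [pc_eq_ncard_range, ← image_compl_repeatStarts,
    (factor_injOn_compl_repeatStarts n).ncard_image]

lemma exists_gt_notMem_repeatStarts {n N : ℕ}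
    (h : (Set.Iic N \ repeatStarts x n).ncard < pc n x) : ∃ q, N < q ∧ q ∉ repeatStarts x n := by
  by_contra! hN
  have hsub : (repeatStarts x n)ᶜ ⊆ Set.Iic N \ repeatStarts x n :=
    fun q hq => ⟨Set.mem_Iic.2 (not_lt.1 fun hlt => hq (hN q hlt)), hq⟩
  rw [pc_eq_ncard_compl_repeatStarts] at h
  exact (Set.ncard_le_ncard hsub ((Set.finite_Iic N).sdiff)).not_gt h

lemma mem_repeatStarts_of_le_of_add_le {m ν k q : ℕ} (hk : k ∈ repeatStarts x m) (hkq : k ≤ q)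
    (hqk : q + ν ≤ k + m) : q ∈ repeatStarts x ν := by
  obtain ⟨j, hj, hjk⟩ := hk
  refine ⟨j + (q - k), by omega, factor_eq_factor_iff.2 fun t ht => ?_⟩
  have := factor_eq_factor_iff.1 hjk (q - k + t) (by omega)
  rwa [← add_assoc, show k + (q - k + t) = q + t by omega] at this

lemma firstRepeat_le {n k : ℕ} (h : k ∈ repeatStarts x n) : firstRepeat x n ≤ k := Nat.sInf_le h

lemma _root_.EventuallyPeriodic.exists_firstRepeat_le (h : EventuallyPeriodic x) :
    ∃ C, ∀ n, firstRepeat x n ≤ C := by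
  obtain ⟨p, hp, N, hper⟩ := h
  refine ⟨N + p, fun n => firstRepeat_le ⟨N, by omega, funext fun t => ?_⟩⟩
  simp only [factor]
  rw [add_right_comm]
  exact (hper _ (by omega)).symm

section Finite

variable [Finite A]

lemma repeatStarts_nonempty (n : ℕ) : (repeatStarts x n).Nonempty := by
  obtain ⟨i, j, hne, h⟩ := Finite.exists_ne_map_eq_of_infinite (factor x n)
  rcases Nat.lt_or_gt_of_ne hne with hij | hij
  · exact ⟨j, i, hij, h⟩
  · exact ⟨i, j, hij, h.symm⟩

lemma firstRepeat_mem (n : ℕ) : firstRepeat x n ∈ repeatStarts x n :=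
  Nat.sInf_mem (repeatStarts_nonempty n)

lemma one_le_firstRepeat (n : ℕ) : 1 ≤ firstRepeat x n := by
  obtain ⟨j, hj, -⟩ := firstRepeat_mem (x := x) n
  omega

lemma firstRepeat_mono : Monotone (firstRepeat x) := fun n m h =>
  firstRepeat_le (mem_repeatStarts_of_le_of_add_le (firstRepeat_mem m) le_rfl (by omega))

lemma rc_eq_firstRepeat_add (n : ℕ) : rc n x = firstRepeat x n + n := by
  have hmem : firstRepeat x n + n ∈
      {m | ∃ j, j + n < m ∧ ∀ t < n, x (j + t) = x (m - n + t)} := by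
    obtain ⟨j, hj, hjk⟩ := firstRepeat_mem (x := x) n
    exact ⟨j, by omega, by simpa using factor_eq_factor_iff.1 hjk⟩
  refine (Nat.sInf_le hmem).antisymm ?_
  obtain ⟨j, hj, hjm⟩ := Nat.sInf_mem ⟨_, hmem⟩
  have := firstRepeat_le (x := x) (n := n) ⟨j, by omega, factor_eq_factor_iff.2 hjm⟩
  omega

lemma firstRepeat_le_pc (n : ℕ) : firstRepeat x n ≤ pc n x := by
  have hfin : (repeatStarts x n)ᶜ.Finite :=
    Set.Finite.of_finite_image ((image_compl_repeatStarts n).symm ▸ Set.toFinite _)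
      (factor_injOn_compl_repeatStarts n)
  have hsub : Set.Iio (firstRepeat x n) ⊆ (repeatStarts x n)ᶜ :=
    fun _ hk => Nat.notMem_of_lt_sInf hk
  simpa [pc_eq_ncard_compl_repeatStarts] using Set.ncard_le_ncard hsub hfin

-- Morse–Hedlund: if `p(n + 1) ≤ p(n)`, every factor of length `n` has a unique right extension.
theorem eventuallyPeriodic_of_pc_succ_le {n : ℕ} (h : pc (n + 1) x ≤ pc n x) :
    EventuallyPeriodic x := by
  have hrange : Fin.init '' Set.range (factor x (n + 1)) = Set.range (factor x n) := by
    rw [← Set.range_comp]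
    rfl
  have hinj : Set.InjOn Fin.init (Set.range (factor x (n + 1))) := by
    refine Set.injOn_of_ncard_image_eq ((Set.ncard_image_le (Set.toFinite _)).antisymm ?_)
    rwa [hrange, ← pc_eq_ncard_range, ← pc_eq_ncard_range]
  have hext {k k' : ℕ} (hk : factor x n k = factor x n k') :
      factor x (n + 1) k = factor x (n + 1) k' :=
    hinj ⟨_, rfl⟩ ⟨_, rfl⟩ hk
  obtain ⟨j, hj, hjb⟩ := firstRepeat_mem (x := x) n
  have hshift (i : ℕ) : factor x n (j + i) = factor x n (firstRepeat x n + i) := by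
    induction i with
    | zero => exact hjb
    | succ i ih => simpa only [tail_factor, ← add_assoc] using congrArg Fin.tail (hext ih)
  refine ⟨firstRepeat x n - j, by omega, j + n, fun m hm => ?_⟩
  have := congrFun (hext (hshift (m - n - j))) (Fin.last n)
  simp only [factor, Fin.val_last] at this
  convert this.symm using 2 <;> omega

theorem strictMono_pc (h : ¬EventuallyPeriodic x) : StrictMono (pc · x) :=
  strictMono_nat_of_lt_succ fun _ =>
    lt_of_not_ge fun hle => h (eventuallyPeriodic_of_pc_succ_le hle)

lemma pc_eq_of_le_of_pc_le (h : ¬EventuallyPeriodic x) {n ν : ℕ} (hnν : n ≤ ν)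
    (hν : pc ν x ≤ ν + 1) : pc n x = n + 1 := by
  have h0 := (strictMono_pc h).add_le_nat n 0
  have hn := (strictMono_pc h).add_le_nat (ν - n) n
  simp only [pc_zero, add_zero, Nat.sub_add_cancel hnν] at h0 hn
  omega

lemma exists_scale_of_notMem_repeatStarts {ν q : ℕ} (hq : q ∉ repeatStarts x ν)
    (hνq : firstRepeat x ν ≤ q) :
    ∃ μ, ν ≤ μ ∧ firstRepeat x μ + μ < q + ν ∧ q < firstRepeat x (μ + 1) := by
  classical
  have hcover {m : ℕ} (hm : q + ν ≤ firstRepeat x m + m) : q < firstRepeat x m :=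
    lt_of_not_ge fun hle => hq (mem_repeatStarts_of_le_of_add_le (firstRepeat_mem m) hle hm)
  have hν : firstRepeat x ν + ν < q + ν := lt_of_not_ge fun h => (hcover h).not_ge hνq
  let P m := firstRepeat x m + m < q + ν
  have hμ : P (Nat.findGreatest P (q + ν)) := Nat.findGreatest_spec (m := ν) (by omega) hν
  have hnext : ¬P (Nat.findGreatest P (q + ν) + 1) :=
    Nat.findGreatest_is_greatest (Nat.lt_succ_self _) (by simp only [P] at hμ ⊢; omega)
  exact ⟨_, Nat.le_findGreatest (by omega) hν, hμ, hcover (not_lt.1 hnext)⟩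

lemma firstRepeat_add_succ_le {ν d : ℕ} (hpc : ν + 1 ≤ pc ν x)
    (hd : ∀ μ ≥ ν, firstRepeat x μ + d ≤ μ) : firstRepeat x ν + (d + 1) ≤ ν := by
  have hν : firstRepeat x ν ≤ ν := by linarith [hd ν le_rfl]
  have hcount : (Set.Iic ν \ repeatStarts x ν).ncard < pc ν x := by
    have hsub : Set.Iic ν \ repeatStarts x ν ⊆ Set.Iic ν \ {firstRepeat x ν} :=
      Set.sdiff_subset_sdiff_right (Set.singleton_subset_iff.2 (firstRepeat_mem ν))
    have := Set.ncard_le_ncard hsub ((Set.finite_Iic ν).sdiff)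
    rw [Set.ncard_sdiff_singleton_of_mem (Set.mem_Iic.2 hν), Set.ncard_Iic_nat] at this
    omega
  obtain ⟨q, hνq, hq⟩ := exists_gt_notMem_repeatStarts hcount
  obtain ⟨μ, hνμ, hμ, hqμ⟩ := exists_scale_of_notMem_repeatStarts hq (by omega)
  have := hd (μ + 1) (by omega)
  have := firstRepeat_mono (x := x) hνμ
  omega

theorem infinite_setOf_lt_firstRepeat (hpc : ∀ n, n + 1 ≤ pc n x) :
    {n | n < firstRepeat x n}.Infinite := by
  refine Set.infinite_of_forall_exists_gt fun N => ?_
  by_contra! hN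
  have hdeficit (k : ℕ) : ∀ m > N, firstRepeat x m + k ≤ m := by
    induction k with
    | zero => exact fun m hm => by simpa using not_lt.1 fun h => (hN m h).not_gt hm
    | succ k ih => exact fun ν hν => firstRepeat_add_succ_le (hpc ν) fun μ hμ => ih μ (by omega)
  have := hdeficit (N + 1) (N + 1) (by omega)
  have := one_le_firstRepeat (x := x) (N + 1)
  omega

lemma pc_le_of_firstRepeat_eq {ν : ℕ} (hle : ∀ n, firstRepeat x n ≤ n + 1)
    (hν : firstRepeat x ν = ν + 1) : pc ν x ≤ ν + 1 := by
  by_contra! hpc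
  have hcount : (Set.Iic ν \ repeatStarts x ν).ncard < pc ν x :=
    (Set.ncard_le_ncard Set.sdiff_subset (Set.finite_Iic ν)).trans_lt (by simpa using hpc)
  obtain ⟨q, hνq, hq⟩ := exists_gt_notMem_repeatStarts hcount
  obtain ⟨μ, hνμ, hμ, hqμ⟩ := exists_scale_of_notMem_repeatStarts hq (by omega)
  have := hle (μ + 1)
  have := firstRepeat_mono (x := x) hνμ
  omega

end Finite

end InfiniteWord

open InfiniteWord

theorem sturmian_iff_rc {A : Type*} [Fintype A] (x : ℕ → A) :
    IsSturmian x ↔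
      ((∀ n ≥ 1, rc n x ≤ 2 * n + 1) ∧ {n : ℕ | rc n x = 2 * n + 1}.Infinite) := by
  simp only [rc_eq_firstRepeat_add]
  constructor
  · intro hSt
    have hle (n : ℕ) : firstRepeat x n ≤ n + 1 := (firstRepeat_le_pc n).trans (hSt.pc_eq n).le
    refine ⟨fun n _ => by linarith [hle n], ?_⟩
    refine (infinite_setOf_lt_firstRepeat fun n => (hSt.pc_eq n).ge).mono
      fun n (hn : n < firstRepeat x n) => ?_
    show firstRepeat x n + n = 2 * n + 1
    linarith [hle n]
  · rintro ⟨hbound, hinf⟩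
    have hle (n : ℕ) : firstRepeat x n ≤ n + 1 := by
      rcases n with _ | n
      · exact (firstRepeat_le_pc 0).trans pc_zero.le
      · linarith [hbound (n + 1) (by omega)]
    have heq : {n | firstRepeat x n = n + 1}.Infinite :=
      hinf.mono fun n (hn : firstRepeat x n + n = 2 * n + 1) => show _ = _ by omega
    have haper : ¬EventuallyPeriodic x := fun hper => by
      obtain ⟨C, hC⟩ := hper.exists_firstRepeat_le
      obtain ⟨n, hn, hCn⟩ := heq.exists_gt C
      exact absurd (hC n) (by rw [hn]; omega)
    intro n _
    obtain ⟨ν, hν, hnν⟩ := heq.exists_gt n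
    exact pc_eq_of_le_of_pc_le haper hnν.le (pc_le_of_firstRepeat_eq hle hν)
end

section
/- Let f be the Fibonacci word over {0,1} and (F_n) the Fibonacci sequence with F₀ = 0, F₁ = 1, F_{n+2} = F_{n+1} + F_n. Then for every n ≥ 3 and every integer m with F_n − 2 < m ≤ F_{n+1} − 2, one has r(m, f) = F_n + m. -/
open Filter

/-- iterates of the Fibonacci substitution 0 ↦ 01, 1 ↦ 0, starting from the letter 0 -/
def fibIter : ℕ → List (Fin 2)
  | 0 => [0]
  | n + 1 => (fibIter n).flatMap fun a => if a = 0 then [0, 1] else [0]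

/-- the Fibonacci word (0-indexed): `fibWord k` is the `(k+1)`-st letter of the unique
fixed point beginning with 0 of the substitution 0 ↦ 01, 1 ↦ 0 -/
def fibWord (k : ℕ) : Fin 2 := (fibIter (k + 1)).getD k 0

/-!
For the upper bound: `f_{k+1} f_k` and `f_k f_{k+1}` agree except in their last two letters, so
the prefix of `f` of length `F_{n+2} - 2` has period `F_n`.

For the lower bound: on its prefix of length `2 F_n - 2` the word `f` coincides with the
`F_n`-periodic word `(f_n)^ω`, where the finite Fibonacci word `f_n = fibIter (n - 2)` contains
`F_{n-1}` zeros. Two windows of length `F_n - 1` starting `d < F_n` apart contain the same number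
of zeros as a full period, so they also agree in the missing letter; hence `(f_n)^ω` has period
`d`, and so period `g = gcd(d, F_n)`. Counting zeros gives `F_n / g ∣ gcd(F_n, F_{n-1}) = 1`, so
`g = F_n`, forcing `d = 0`.
-/

open Function

theorem Nat.count_congr {p q : ℕ → Prop} [DecidablePred p] [DecidablePred q] {n : ℕ}
    (h : ∀ k < n, p k ↔ q k) : Nat.count p n = Nat.count q n :=
  (Nat.count_mono_left fun k hk => (h k hk).1).antisymm
    (Nat.count_mono_left fun k hk => (h k hk).2)

namespace Function.Periodic

theorem gcd {α : Type*} {f : ℕ → α} {c d : ℕ} (hc : Periodic f c) (hd : Periodic f d) :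
    Periodic f (c.gcd d) := by
  induction c, d using Nat.gcd.induction with
  | H0 d => simpa using hd
  | H1 c d _ ih =>
    rw [Nat.gcd_rec]
    refine ih (fun x => ?_) hc
    rw [← (hc.nat_mul (d / c)) (x + d % c), Nat.cast_id, add_assoc, Nat.mod_add_div', hd]

variable {P : ℕ → Prop} [DecidablePred P] {c : ℕ}

theorem count_mul (hP : Periodic P c) (k : ℕ) : Nat.count P (k * c) = k * Nat.count P c := by
  induction k with
  | zero => simp
  | succ k ih =>
    have hshift : (fun i => P (k * c + i)) = P := funext fun i => by
      rw [add_comm]; exact hP.nat_mul k i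
    simp only [Nat.succ_mul, Nat.count_add, hshift, ih]

theorem count_const_add (hP : Periodic P c) (j : ℕ) :
    Nat.count (fun i => P (j + i)) c = Nat.count P c := by
  have hshift : (fun i => P (c + i)) = P := funext fun i => by rw [add_comm]; exact hP i
  have h := Nat.count_add (p := P) c j
  simp only [hshift, add_comm c j, Nat.count_add] at h
  omega

theorem dvd_of_coprime_count {d : ℕ} (hc : Periodic P c) (hd : Periodic P d)
    (hcop : c.Coprime (Nat.count P c)) : c ∣ d := by
  have hcg : c / c.gcd d * c.gcd d = c := Nat.div_mul_cancel (Nat.gcd_dvd_left c d)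
  have hquot : c / c.gcd d = 1 := by
    refine Nat.eq_one_of_dvd_coprimes hcop (Dvd.intro _ hcg) ?_
    have h := (hc.gcd hd).count_mul (c / c.gcd d)
    rw [hcg] at h
    exact Dvd.intro _ h.symm
  rw [← hcg, hquot, one_mul]
  exact Nat.gcd_dvd_right c d

theorem eq_of_window_iff (hP : Periodic P c) (hcop : c.Coprime (Nat.count P c)) {j p : ℕ}
    (hjp : j ≤ p) (hpc : p < j + c) (hwin : ∀ t < c - 1, P (j + t) ↔ P (p + t)) : j = p := by
  set Q := fun i => P (j + i) with hQdef
  set R := fun i => P (p + i)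
  have hQ : Periodic Q c := hP.const_add j
  have hR : Periodic R c := hP.const_add p
  -- both windows contain `Nat.count P c` letters `P` in a full period
  have hlast : Q (c - 1) ↔ R (c - 1) := by
    have hc : c - 1 + 1 = c := by omega
    calc Q (c - 1) ↔ Nat.count Q (c - 1) < Nat.count Q (c - 1 + 1) :=
          Nat.count_lt_count_succ_iff.symm
      _ ↔ Nat.count R (c - 1) < Nat.count R (c - 1 + 1) := by
          rw [hc, Nat.count_congr hwin, count_const_add hP, count_const_add hP]
      _ ↔ R (c - 1) := Nat.count_lt_count_succ_iff
  have hall : ∀ i, Q i ↔ R i := fun i => by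
    rw [← hQ.map_mod_nat, ← hR.map_mod_nat]
    rcases Nat.lt_or_ge (i % c) (c - 1) with hi | hi
    · exact hwin _ hi
    · rwa [show i % c = c - 1 by have := Nat.mod_lt i (show c > 0 by omega); omega]
  have hQd : Periodic Q (p - j) := fun x => by
    simp only [hQdef, show j + (x + (p - j)) = p + x by omega]
    exact propext (hall x).symm
  have hdvd := hQ.dvd_of_coprime_count hQd (by rwa [count_const_add hP])
  have := Nat.eq_zero_of_dvd_of_lt hdvd (by omega)
  omega

end Function.Periodic

theorem fibIter_add_two (n : ℕ) : fibIter (n + 2) = fibIter (n + 1) ++ fibIter n := by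
  induction n with
  | zero => rfl
  | succ n ih =>
    change List.flatMap _ (fibIter (n + 2)) = _
    conv_lhs => rw [ih, List.flatMap_append]
    rfl

theorem length_fibIter : ∀ n, (fibIter n).length = Nat.fib (n + 2)
  | 0 => rfl
  | 1 => rfl
  | n + 2 => by
    rw [fibIter_add_two, List.length_append, length_fibIter (n + 1), length_fibIter n,
      Nat.fib_add_two (n := n + 2), add_comm]

theorem fibIter_prefix_of_le {m n : ℕ} (h : m ≤ n) : fibIter m <+: fibIter n := by
  induction n, h using Nat.le_induction with
  | base => exact List.prefix_rfl
  | succ n _ ih =>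
    refine ih.trans ?_
    cases n with
    | zero => exact ⟨[1], rfl⟩
    | succ n => exact fibIter_add_two n ▸ List.prefix_append _ _

theorem fibWord_eq_getElem {n k : ℕ} (h : k < (fibIter n).length) :
    fibWord k = (fibIter n)[k] := by
  have hk : k < (fibIter (k + 1)).length := by
    rw [length_fibIter]
    exact (Nat.fib_add_two_strictMono.id_le k).trans_lt (Nat.fib_add_two_strictMono k.lt_succ_self)
  rw [fibWord, List.getD_eq_getElem _ _ hk]
  rcases le_total (k + 1) n with hn | hn
  · exact (fibIter_prefix_of_le hn).getElem hk
  · exact ((fibIter_prefix_of_le hn).getElem h).symm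

theorem take_fibIter_append_comm : ∀ n : ℕ,
    (fibIter (n + 1) ++ fibIter n).take (Nat.fib (n + 4) - 2)
      = (fibIter n ++ fibIter (n + 1)).take (Nat.fib (n + 4) - 2)
  | 0 => rfl
  | n + 1 => by
    have hlen : Nat.fib (n + 5) - 2 = (fibIter (n + 1)).length + (Nat.fib (n + 4) - 2) := by
      have h5 : Nat.fib (n + 5) = Nat.fib (n + 3) + Nat.fib (n + 4) := Nat.fib_add_two
      have h4 : 2 ≤ Nat.fib (n + 4) := Nat.fib_mono (show 3 ≤ n + 4 by omega)
      have h3 : (fibIter (n + 1)).length = Nat.fib (n + 3) := length_fibIter _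
      omega
    rw [fibIter_add_two, hlen, List.append_assoc, List.take_length_add_append,
      List.take_length_add_append, take_fibIter_append_comm n]

theorem getElem?_fibIter {n k : ℕ} (h : k < (fibIter n).length) :
    (fibIter n)[k]? = some (fibWord k) := by
  rw [List.getElem?_eq_getElem h, fibWord_eq_getElem h]

theorem fibWord_add_fib {n i : ℕ} (h : i + 2 < Nat.fib (n + 1)) :
    fibWord (i + Nat.fib n) = fibWord i := by
  obtain _ | _ | k := n
  · rfl
  · simp at h
  replace h : i + 2 < Nat.fib (k + 3) := h
  show fibWord (i + Nat.fib (k + 2)) = fibWord i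
  have hk : (fibIter k).length = Nat.fib (k + 2) := length_fibIter k
  have hk1 : (fibIter (k + 1)).length = Nat.fib (k + 3) := length_fibIter (k + 1)
  have hk2 : (fibIter (k + 2)).length = Nat.fib (k + 4) := length_fibIter (k + 2)
  have hfib : Nat.fib (k + 4) = Nat.fib (k + 2) + Nat.fib (k + 3) := Nat.fib_add_two
  apply Option.some_injective
  rw [← getElem?_fibIter (n := k + 2) (by omega),
    ← getElem?_fibIter (n := k + 1) (by omega), fibIter_add_two,
    ← List.getElem?_take_of_lt (show i + Nat.fib (k + 2) < Nat.fib (k + 4) - 2 by omega),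
    take_fibIter_append_comm, List.getElem?_take_of_lt (by omega),
    List.getElem?_append_right (by omega), hk, Nat.add_sub_cancel]

theorem count_fibWord_eq_zero : ∀ k : ℕ,
    Nat.count (fibWord · = 0) (Nat.fib (k + 2)) = Nat.fib (k + 1)
  | 0 => by decide
  | 1 => by decide
  | k + 2 => by
    have hk : ∀ i < Nat.fib (k + 2), fibWord (i + Nat.fib (k + 3)) = 0 ↔ fibWord i = 0 := by
      intro i hi
      have h4 : Nat.fib (k + 4) = Nat.fib (k + 2) + Nat.fib (k + 3) := Nat.fib_add_two
      have h3 : 2 ≤ Nat.fib (k + 3) := Nat.fib_mono (show 3 ≤ k + 3 by omega)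
      rw [fibWord_add_fib (show i + 2 < Nat.fib (k + 4) by omega)]
    rw [Nat.fib_add_two (n := k + 2), Nat.count_add', Nat.count_congr hk,
      count_fibWord_eq_zero k, count_fibWord_eq_zero (k + 1), Nat.fib_add_two (n := k + 1)]

theorem fibWord_window_injective {k j p : ℕ} (hjp : j ≤ p) (hp : p < Nat.fib (k + 2))
    (h : ∀ t < Nat.fib (k + 2) - 1, fibWord (j + t) = fibWord (p + t)) : j = p := by
  set F := Nat.fib (k + 2)
  have hmod : ∀ i, i + 2 < 2 * F → fibWord (i % F) = fibWord i := by
    intro i hi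
    rcases lt_or_ge i F with hiF | hiF
    · rw [Nat.mod_eq_of_lt hiF]
    · obtain ⟨i, rfl⟩ := Nat.exists_eq_add_of_le' hiF
      have : F ≤ Nat.fib (k + 3) := Nat.fib_le_fib_succ
      rw [Nat.add_mod_right, Nat.mod_eq_of_lt (by omega),
        fibWord_add_fib (show i + 2 < Nat.fib (k + 3) by omega)]
  refine Periodic.eq_of_window_iff (P := fun i => fibWord (i % F) = 0) (c := F)
    (fun i => by simp only [Nat.add_mod_right]) ?_ hjp (by omega) fun t ht => ?_
  · rw [Nat.count_congr fun i hi => by rw [Nat.mod_eq_of_lt hi], count_fibWord_eq_zero]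
    exact (Nat.fib_coprime_fib_succ (k + 1)).symm
  · rw [hmod _ (by omega), hmod _ (by omega), h t ht]

theorem rc_eq_add {A : Type*} {x : ℕ → A} {n d : ℕ} (hd : 0 < d)
    (hper : ∀ t < n, x (t + d) = x t)
    (hdist : ∀ j p, j < p → p < d → ¬ ∀ t < n, x (j + t) = x (p + t)) :
    rc n x = d + n := by
  have hmem : d + n ∈ {m | ∃ j, j + n < m ∧ ∀ t < n, x (j + t) = x (m - n + t)} :=
    ⟨0, by omega, fun t ht => by rw [zero_add, Nat.add_sub_cancel, add_comm, hper t ht]⟩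
  refine le_antisymm (Nat.sInf_le hmem) (le_csInf ⟨_, hmem⟩ ?_)
  rintro m ⟨j, hj, hx⟩
  by_contra! hm
  exact hdist j (m - n) (by omega) (by omega) hx

theorem rc_fibWord (n : ℕ) (hn : 3 ≤ n) (m : ℕ)
    (h1 : Nat.fib n - 2 < m) (h2 : m ≤ Nat.fib (n + 1) - 2) :
    rc m fibWord = Nat.fib n + m := by
  obtain ⟨k, rfl⟩ : ∃ k, n = k + 2 := ⟨n - 2, by omega⟩
  refine rc_eq_add (Nat.fib_pos.2 (by omega)) (fun t ht => fibWord_add_fib (by omega)) ?_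
  intro j p hjp hp hwin
  exact hjp.ne (fibWord_window_injective hjp.le hp fun t ht => hwin t (by omega))
end

section
/- Let t be the Thue–Morse word over {0,1}. Then r(1, t) = 3, and for every n ≥ 1 and every integer m with 0 ≤ m < 2^{n−1}, one has r(2ⁿ − m, t) = 5·2^{n−1} − m. -/
open Filter

/-- the Thue–Morse word (0-indexed): `thueMorse k` is the parity of the number of 1's
in the binary expansion of `k` -/
def thueMorse (k : ℕ) : ℕ := (Nat.digits 2 k).sum % 2


lemma tm_lt (k : ℕ) : thueMorse k < 2 := Nat.mod_lt _ (by norm_num)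
lemma tm_even (k : ℕ) : thueMorse (2*k) = thueMorse k := by
  rcases Nat.eq_zero_or_pos k with h|h
  · simp [h]
  · unfold thueMorse
    rw [Nat.digits_def' (by norm_num : (1:ℕ) < 2) (by omega)]
    simp [Nat.mul_div_cancel_left _ (by norm_num : 0 < 2), Nat.mul_mod_right]
lemma tm_odd (k : ℕ) : thueMorse (2*k+1) = (thueMorse k + 1) % 2 := by
  unfold thueMorse
  rw [Nat.digits_def' (by norm_num : (1:ℕ) < 2) (by omega)]
  have h1 : (2*k+1) % 2 = 1 := by omega
  have h2 : (2*k+1) / 2 = k := by omega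
  rw [h1, h2]
  simp [List.sum_cons, Nat.add_mod, Nat.add_comm]

lemma tm_pair (k : ℕ) : thueMorse (2*k) ≠ thueMorse (2*k+1) := by
  have h1 := tm_even k; have h2 := tm_odd k; have h3 := tm_lt k; omega

lemma tm_eq_odd {n : ℕ} (h : thueMorse n = thueMorse (n+1)) : n % 2 = 1 := by
  by_contra hc
  have h2 : n = 2*(n/2) := by omega
  have hp := tm_pair (n/2)
  rw [← h2] at hp
  exact hp h

lemma tm_no3 (n : ℕ) : ¬(thueMorse n = thueMorse (n+1) ∧ thueMorse (n+1) = thueMorse (n+2)) := by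
  rintro ⟨h1, h2⟩
  have o1 := tm_eq_odd h1
  have o2 : (n+1) % 2 = 1 := tm_eq_odd (by rw [show n+1+1 = n+2 from rfl]; exact h2)
  omega

lemma tm_window (i : ℕ) : ∃ k < 4, thueMorse (i+k) = thueMorse (i+k+1) := by
  by_contra hc
  push_neg at hc
  have lx : ∀ a, thueMorse a < 2 := tm_lt
  rcases Nat.even_or_odd i with ⟨a, ha⟩ | ⟨a, ha⟩
  · have h1 := hc 1 (by norm_num)
    have h3 := hc 3 (by norm_num)
    rw [show i+1+1 = 2*(a+1) by omega, show i+1 = 2*a+1 by omega, tm_even, tm_odd] at h1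
    rw [show i+3+1 = 2*(a+2) by omega, show i+3 = 2*(a+1)+1 by omega, tm_even, tm_odd] at h3
    have := tm_no3 a
    have l1 := lx a; have l2 := lx (a+1); have l3 := lx (a+2)
    omega
  · have h0 := hc 0 (by norm_num)
    have h2 := hc 2 (by norm_num)
    rw [show i+0+1 = 2*(a+1) by omega, show i+0 = 2*a+1 by omega, tm_even, tm_odd] at h0
    rw [show i+2+1 = 2*(a+2) by omega, show i+2 = 2*(a+1)+1 by omega, tm_even, tm_odd] at h2
    have := tm_no3 a
    have l1 := lx a; have l2 := lx (a+1); have l3 := lx (a+2)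
    omega

/-- synchronization: equal factors of length 5 start at positions of equal parity -/
lemma tm_sync {i i' L : ℕ} (hL : 5 ≤ L) (hE : ∀ k < L, thueMorse (i+k) = thueMorse (i'+k)) :
    i % 2 = i' % 2 := by
  obtain ⟨k, hk, he⟩ := tm_window i
  have e1 := hE k (by omega)
  have e2 := hE (k+1) (by omega)
  rw [show i + (k+1) = i+k+1 by omega, show i' + (k+1) = i'+k+1 by omega] at e2
  have he' : thueMorse (i'+k) = thueMorse (i'+k+1) := by rw [← e1, ← e2]; exact he
  have o1 := tm_eq_odd he
  have o2 := tm_eq_odd he'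
  omega


lemma v0 : thueMorse 0 = 0 := by norm_num [thueMorse]
lemma v1 : thueMorse 1 = 1 := by norm_num [thueMorse]
lemma v2 : thueMorse 2 = 1 := by norm_num [thueMorse]
lemma v3 : thueMorse 3 = 0 := by norm_num [thueMorse]
lemma v4 : thueMorse 4 = 1 := by norm_num [thueMorse]
lemma v5 : thueMorse 5 = 0 := by norm_num [thueMorse]
lemma v6 : thueMorse 6 = 0 := by norm_num [thueMorse]
lemma v7 : thueMorse 7 = 1 := by norm_num [thueMorse]

/-- lower bound: among the first `3·2^n` positions, no two equal factors of length `2^n+1` -/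
lemma tm_Q : ∀ n, ∀ i i', i < i' → i' < 3*2^n →
    ¬(∀ k < 2^n+1, thueMorse (i+k) = thueMorse (i'+k)) := by
  intro n
  induction n with
  | zero =>
    intro i i' hii hi' hE
    have e0 := hE 0 (by norm_num)
    have e1 := hE 1 (by norm_num)
    simp only [Nat.add_zero] at e0
    interval_cases i' <;> interval_cases i <;>
      simp only [v0, v1, v2, v3, Nat.reduceAdd] at e0 e1 <;> omega
  | succ n ih =>
    rcases Nat.eq_zero_or_pos n with hn | hn
    · subst hn
      intro i i' hii hi' hE
      have e0 := hE 0 (by norm_num)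
      have e1 := hE 1 (by norm_num)
      have e2 := hE 2 (by norm_num)
      simp only [Nat.add_zero] at e0
      norm_num at hi'
      interval_cases i' <;> interval_cases i <;>
        simp only [v0, v1, v2, v3, v4, v5, v6, v7, Nat.reduceAdd] at e0 e1 e2 <;> omega
    · intro i i' hii hi' hE
      have hL : (5:ℕ) ≤ 2^(n+1)+1 := by
        have : 2^2 ≤ 2^(n+1) := Nat.pow_le_pow_right (by norm_num) (by omega)
        omega
      have hpar := tm_sync hL hE
      have key : ∀ k < 2^n+1, thueMorse (i/2 + k) = thueMorse (i'/2 + k) := by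
        intro k hk
        have h2k : 2*k < 2^(n+1)+1 := by
          have : 2^(n+1) = 2*2^n := by ring
          omega
        have e := hE (2*k) h2k
        rcases Nat.even_or_odd i with ⟨a, ha⟩ | ⟨a, ha⟩
        · have ha' : ∃ a', i' = 2*a' := ⟨i'/2, by omega⟩
          obtain ⟨a', ha'⟩ := ha'
          rw [show i + 2*k = 2*(a+k) by omega, show i' + 2*k = 2*(a'+k) by omega,
            tm_even, tm_even] at e
          rw [show i/2 = a by omega, show i'/2 = a' by omega]
          exact e
        · have ha' : ∃ a', i' = 2*a'+1 := ⟨i'/2, by omega⟩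
          obtain ⟨a', ha'⟩ := ha'
          rw [show i + 2*k = 2*(a+k)+1 by omega, show i' + 2*k = 2*(a'+k)+1 by omega,
            tm_odd, tm_odd] at e
          rw [show i/2 = a by omega, show i'/2 = a' by omega]
          have l1 := tm_lt (a+k); have l2 := tm_lt (a'+k)
          omega
      exact ih (i/2) (i'/2) (by omega) (by omega) key

/-- upper bound: `t(3·2^n + k) = t(k)` for `k < 2^(n+1)` -/
lemma tm_per : ∀ n, ∀ k < 2^(n+1), thueMorse (3*2^n + k) = thueMorse k := by
  intro n
  induction n with
  | zero =>
    intro k hk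
    norm_num at hk
    interval_cases k <;> simp [v0, v1, v3, v4]
  | succ n ih =>
    intro k hk
    rcases Nat.even_or_odd k with ⟨j, hj⟩ | ⟨j, hj⟩
    · have hjlt : j < 2^(n+1) := by
        have : 2^(n+2) = 2*2^(n+1) := by ring
        omega
      rw [show 3*2^(n+1) + k = 2*(3*2^n + j) by subst hj; ring, tm_even,
        show k = 2*j by omega, tm_even]
      exact ih j hjlt
    · have hjlt : j < 2^(n+1) := by
        have : 2^(n+2) = 2*2^(n+1) := by ring
        omega
      rw [show 3*2^(n+1) + k = 2*(3*2^n + j)+1 by omega, tm_odd,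
        show k = 2*j+1 by omega, tm_odd, ih j hjlt]

theorem rc_thueMorse :
    rc 1 thueMorse = 3 ∧
      ∀ n ≥ 1, ∀ m < 2 ^ (n - 1), rc (2 ^ n - m) thueMorse = 5 * 2 ^ (n - 1) - m := by
  constructor
  · have h3 : 3 ∈ {m | ∃ j, j + 1 < m ∧ ∀ t < 1, thueMorse (j + t) = thueMorse (m - 1 + t)} := by
      refine ⟨1, by norm_num, ?_⟩
      intro t ht
      interval_cases t
      simp [v1, v2]
    have hmem := Nat.sInf_mem ⟨3, h3⟩
    obtain ⟨j, hj, hjE⟩ := hmem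
    have hge : 3 ≤ sInf {m | ∃ j, j + 1 < m ∧ ∀ t < 1, thueMorse (j + t) = thueMorse (m - 1 + t)} := by
      by_contra hc
      push_neg at hc
      have hj0 : j = 0 := by omega
      have hm2 : sInf {m | ∃ j, j + 1 < m ∧ ∀ t < 1, thueMorse (j + t) = thueMorse (m - 1 + t)} = 2 := by omega
      have := hjE 0 (by norm_num)
      rw [hj0, hm2] at this
      simp [v0, v1] at this
    exact le_antisymm (Nat.sInf_le h3) hge
  · intro n hn m hm
    obtain ⟨n', rfl⟩ : ∃ n', n = n' + 1 := ⟨n - 1, by omega⟩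
    simp only [Nat.add_sub_cancel] at hm ⊢
    set p : ℕ := 2^n' with hp
    have hp1 : 1 ≤ p := Nat.one_le_two_pow
    have hpow : (2:ℕ)^(n'+1) = 2*p := by rw [hp]; ring
    set N : ℕ := 2^(n'+1) - m with hN
    set v : ℕ := 5*p - m with hv
    have hNv : v - N = 3*p := by omega
    have hvmem : v ∈ {m_1 | ∃ j, j + N < m_1 ∧ ∀ t < N, thueMorse (j + t) = thueMorse (v - N + t)} := by
      refine ⟨0, by omega, ?_⟩
      intro t ht
      rw [hNv, Nat.zero_add]
      exact (tm_per n' t (by omega)).symm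
    have hlow : ∀ w ∈ {m_1 | ∃ j, j + N < m_1 ∧ ∀ t < N, thueMorse (j + t) = thueMorse (w - N + t)}, v ≤ w := by
      rintro w ⟨j, hjw, hE⟩
      by_contra hc
      push_neg at hc
      refine tm_Q n' j (w - N) (by omega) (by omega) ?_
      intro k hk
      have hkN : k < N := by omega
      exact hE k hkN
    exact le_antisymm (Nat.sInf_le hvmem) (le_csInf ⟨v, hvmem⟩ hlow)
end

section
/- Let x be an infinite word over a finite alphabet and a a letter of the alphabet. Then for every n ≥ 2, one has r(n−1, x) + 1 ≤ r(n, a x) ≤ r(n, x) + 1, where a x denotes the infinite word obtained by prepending the letter a to x. -/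
open Filter

lemma rc_set_nonempty {A : Type*} [Fintype A] (n : ℕ) (x : ℕ → A) :
    {m | ∃ j, j + n < m ∧ ∀ t < n, x (j + t) = x (m - n + t)}.Nonempty := by
  obtain ⟨i, i', hne, heq⟩ := Finite.exists_ne_map_eq_of_infinite
    (fun i : ℕ => (fun t : Fin n => x (i + t)))
  wlog h : i < i' generalizing i i'
  · exact this i' i hne.symm heq.symm (by omega)
  refine ⟨i' + n, i, by omega, fun t ht => ?_⟩
  have := congrFun heq ⟨t, ht⟩
  simpa [Nat.add_sub_cancel] using this

theorem rc_prepend {A : Type*} [Fintype A] (x : ℕ → A) (a : A) (n : ℕ) (hn : 2 ≤ n) :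
    rc (n - 1) x + 1 ≤ rc n (fun k => if k = 0 then a else x (k - 1)) ∧
      rc n (fun k => if k = 0 then a else x (k - 1)) ≤ rc n x + 1 := by
  set y : ℕ → A := fun k => if k = 0 then a else x (k - 1) with hy
  have hyx : ∀ k, y (k + 1) = x k := fun k => by simp [hy]
  constructor
  · -- lower bound
    show rc (n-1) x + 1 ≤ sInf {m | ∃ j, j + n < m ∧ ∀ t < n, y (j + t) = y (m - n + t)}
    obtain ⟨j, hj, hrep⟩ := Nat.sInf_mem (rc_set_nonempty n y)
    set m := sInf {m | ∃ j, j + n < m ∧ ∀ t < n, y (j + t) = y (m - n + t)} with hm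
    have h1 : rc (n - 1) x ≤ m - 1 := by
      apply Nat.sInf_le
      refine ⟨j, by omega, fun t ht => ?_⟩
      have h2 := hrep (t + 1) (by omega)
      have e1 : j + (t + 1) = (j + t) + 1 := by omega
      have e2 : m - n + (t + 1) = (m - n + t) + 1 := by omega
      rw [e1, e2, hyx, hyx] at h2
      have e3 : m - 1 - (n - 1) + t = m - n + t := by omega
      rw [e3]
      exact h2
    omega
  · -- upper bound
    show sInf {m | ∃ j, j + n < m ∧ ∀ t < n, y (j + t) = y (m - n + t)} ≤ rc n x + 1
    obtain ⟨j, hj, hrep⟩ := Nat.sInf_mem (rc_set_nonempty n x)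
    set m := sInf {m | ∃ j, j + n < m ∧ ∀ t < n, x (j + t) = x (m - n + t)} with hm
    rw [show rc n x = m from rfl]
    apply Nat.sInf_le
    refine ⟨j + 1, by omega, fun t ht => ?_⟩
    have e1 : j + 1 + t = (j + t) + 1 := by omega
    have e2 : m + 1 - n + t = (m - n + t) + 1 := by omega
    rw [e1, e2, hyx, hyx]
    exact hrep t ht
end

section
/- Let θ ∈ (0,1) be an irrational number whose continued fraction expansion θ = [0; a₁, a₂, a₃, …] has an unbounded sequence of partial quotients (aₖ). Then every Sturmian word x of slope θ (that is, x = s_{θ,ρ} or x = s′_{θ,ρ} for some real ρ) satisfies rep(x) = 1. -/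
open Filter

/-- the Sturmian word of slope θ and intercept ρ: its `n`-th letter (`n ≥ 1`, here
0-indexed by `k = n - 1`) is `⌊(n+1)θ+ρ⌋ - ⌊nθ+ρ⌋` -/
noncomputable def sturmianFloor (θ ρ : ℝ) (k : ℕ) : ℤ :=
  ⌊((k : ℝ) + 2) * θ + ρ⌋ - ⌊((k : ℝ) + 1) * θ + ρ⌋

/-- the word `s′_{θ,ρ}`: its `n`-th letter (`n ≥ 1`, here 0-indexed by `k = n - 1`)
is `⌈(n+1)θ+ρ⌉ - ⌈nθ+ρ⌉` -/
noncomputable def sturmianCeil (θ ρ : ℝ) (k : ℕ) : ℤ :=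
  ⌈((k : ℝ) + 2) * θ + ρ⌉ - ⌈((k : ℝ) + 1) * θ + ρ⌉

namespace BK

open Filter GenContFract

variable {θ : ℝ}

lemma notTerm (hθ : Irrational θ) (n : ℕ) : ¬(GenContFract.of θ).TerminatedAt n := by
  intro h
  have hterm : (GenContFract.of θ).Terminates := ⟨n, h⟩
  rcases (terminates_iff_rat θ).mp hterm with ⟨q, hq⟩
  exact hθ ⟨q, hq.symm⟩

lemma exists_s (hθ : Irrational θ) (n : ℕ) :
    ∃ gp, (GenContFract.of θ).s.get? n = some gp ∧ gp.a = 1 ∧ ∃ b : ℕ, 1 ≤ b ∧ gp.b = (b : ℝ) := by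
  obtain ⟨gp, hgp⟩ := Option.ne_none_iff_exists'.1 (notTerm hθ n)
  have ha : gp.a = 1 := of_partNum_eq_one (partNum_eq_s_a hgp)
  have hb1 : (1 : ℝ) ≤ gp.b := of_one_le_get?_partDen (partDen_eq_s_b hgp)
  obtain ⟨z, hz⟩ := exists_int_eq_of_partDen (partDen_eq_s_b hgp)
  have hz1 : 1 ≤ z := by exact_mod_cast hz ▸ hb1
  exact ⟨gp, hgp, ha, z.toNat, by omega, by rw [hz]; norm_cast; omega⟩

lemma contsAux_int (hθ : Irrational θ) :
    ∀ n, (∃ P : ℤ, ((GenContFract.of θ).contsAux n).a = (P : ℝ)) ∧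
      ∃ Q : ℕ, ((GenContFract.of θ).contsAux n).b = (Q : ℝ) := by
  have H : ∀ n, ((∃ P : ℤ, ((GenContFract.of θ).contsAux n).a = (P : ℝ)) ∧
      (∃ Q : ℕ, ((GenContFract.of θ).contsAux n).b = (Q : ℝ))) ∧
      ((∃ P : ℤ, ((GenContFract.of θ).contsAux (n+1)).a = (P : ℝ)) ∧
      (∃ Q : ℕ, ((GenContFract.of θ).contsAux (n+1)).b = (Q : ℝ))) := by
    intro n
    induction n with
    | zero =>
      refine ⟨⟨⟨1, by simp⟩, ⟨0, by simp⟩⟩, ⟨⟨⌊θ⌋, ?_⟩, ⟨1, by simp⟩⟩⟩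
      simp [of_h_eq_floor]
    | succ n ih =>
      refine ⟨ih.2, ?_⟩
      obtain ⟨gp, hgp, ha, b, hb1, hb⟩ := exists_s hθ n
      have hrec := contsAux_recurrence hgp rfl rfl
      obtain ⟨⟨P0, hP0⟩, ⟨Q0, hQ0⟩⟩ := ih.1
      obtain ⟨⟨P1, hP1⟩, ⟨Q1, hQ1⟩⟩ := ih.2
      rw [hrec]
      constructor
      · exact ⟨(b : ℤ) * P1 + P0, by simp only [ha, hb, hP0, hP1, one_mul]; push_cast; ring⟩
      · exact ⟨b * Q1 + Q0, by simp only [ha, hb, hQ0, hQ1, one_mul]; push_cast; ring⟩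
  exact fun n => (H n).1

lemma num_int (hθ : Irrational θ) (n : ℕ) : ∃ P : ℤ, (GenContFract.of θ).nums n = (P : ℝ) :=
  (contsAux_int hθ (n+1)).1

lemma den_nat (hθ : Irrational θ) (n : ℕ) : ∃ Q : ℕ, (GenContFract.of θ).dens n = (Q : ℝ) :=
  (contsAux_int hθ (n+1)).2

lemma den_pos (hθ : Irrational θ) (n : ℕ) : (1 : ℝ) ≤ (GenContFract.of θ).dens n := by
  have h := succ_nth_fib_le_of_nth_den (v := θ) (n := n) (Or.inr (notTerm hθ (n-1)))
  calc (1:ℝ) = ((Nat.fib 1 : ℕ) : ℝ) := by simp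
  _ ≤ ((Nat.fib (n+1) : ℕ) : ℝ) := by
      exact_mod_cast Nat.fib_mono (by omega)
  _ ≤ (GenContFract.of θ).dens n := h

lemma stream_pos (hθ : Irrational θ) (n : ℕ) :
    ∃ ifp, IntFractPair.stream θ n = some ifp ∧ 0 < ifp.fr := by
  have hnone : IntFractPair.stream θ (n+1) ≠ none := by
    intro h
    exact notTerm hθ n (of_terminatedAt_n_iff_succ_nth_intFractPair_stream_eq_none.mpr h)
  obtain ⟨ifp, hifp⟩ := Option.ne_none_iff_exists'.1 (fun h => hnone (by
    exact IntFractPair.succ_nth_stream_eq_none_iff.mpr (Or.inl h)))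
  refine ⟨ifp, hifp, ?_⟩
  rcases lt_or_eq_of_le (IntFractPair.nth_stream_fr_nonneg hifp) with h | h
  · exact h
  · exact absurd (IntFractPair.succ_nth_stream_eq_none_iff.mpr (Or.inr ⟨ifp, hifp, h.symm⟩)) hnone

/-- error term -/
noncomputable def er (θ : ℝ) (n : ℕ) : ℝ := θ * (GenContFract.of θ).dens n - (GenContFract.of θ).nums n

lemma er_eq (hθ : Irrational θ) (n : ℕ) :
    er θ n = (GenContFract.of θ).dens n * (θ - (GenContFract.of θ).convs n) := by
  have hd : (GenContFract.of θ).dens n ≠ 0 := by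
    have := den_pos hθ n; linarith
  rw [conv_eq_num_div_den, er]
  field_simp

lemma er_sign (hθ : Irrational θ) (n : ℕ) : 0 < (-1 : ℝ)^n * er θ n := by
  obtain ⟨ifp, hifp, hfr⟩ := stream_pos hθ n
  have h := sub_convs_eq hifp
  simp only at h
  rw [if_neg (ne_of_gt hfr)] at h
  have hB : (1:ℝ) ≤ ((GenContFract.of θ).contsAux (n+1)).b := by
    have := den_pos hθ n
    rwa [den_eq_conts_b, nth_cont_eq_succ_nth_contAux] at this
  have hpB : (0:ℝ) ≤ ((GenContFract.of θ).contsAux n).b := zero_le_of_contsAux_b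
  have hD : 0 < ((GenContFract.of θ).contsAux (n+1)).b * (ifp.fr⁻¹ * ((GenContFract.of θ).contsAux (n+1)).b
      + ((GenContFract.of θ).contsAux n).b) := by positivity
  have h2 : ((-1:ℝ)^n) * ((-1:ℝ)^n) = 1 := by
    rw [← pow_add]
    exact Even.neg_one_pow ⟨n, by ring⟩
  have hden := den_pos hθ n
  rw [er_eq hθ, h]
  have key : (-1:ℝ)^n * ((GenContFract.of θ).dens n * ((-1:ℝ)^n / (((GenContFract.of θ).contsAux (n+1)).b * (ifp.fr⁻¹ * ((GenContFract.of θ).contsAux (n+1)).b + ((GenContFract.of θ).contsAux n).b)))) = (GenContFract.of θ).dens n / (((GenContFract.of θ).contsAux (n+1)).b * (ifp.fr⁻¹ * ((GenContFract.of θ).contsAux (n+1)).b + ((GenContFract.of θ).contsAux n).b)) := by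
    rcases neg_one_pow_eq_or ℝ n with hs | hs <;> rw [hs] <;> ring
  rw [key]
  positivity

lemma er_ne (hθ : Irrational θ) (n : ℕ) : er θ n ≠ 0 := by
  intro h
  have := er_sign hθ n
  rw [h, mul_zero] at this
  exact lt_irrefl _ this

lemma er_mul_neg (hθ : Irrational θ) (n : ℕ) : er θ n * er θ (n+1) < 0 := by
  have h1 := er_sign hθ n
  have h2 := er_sign hθ (n+1)
  have h3 : ((-1:ℝ)^n * er θ n) * ((-1:ℝ)^(n+1) * er θ (n+1)) > 0 := mul_pos h1 h2
  have h4 : ((-1:ℝ)^n) * ((-1:ℝ)^(n+1)) = -1 := by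
    rw [← pow_add]
    exact Odd.neg_one_pow ⟨n, by ring⟩
  nlinarith

lemma er_bound (hθ : Irrational θ) (n : ℕ) : |er θ n| ≤ 1 / (GenContFract.of θ).dens (n+1) := by
  have h := abs_sub_convs_le (notTerm hθ n)
  have hd := den_pos hθ n
  have hd1 := den_pos hθ (n+1)
  rw [er_eq hθ, abs_mul, abs_of_nonneg (by linarith : (0:ℝ) ≤ (GenContFract.of θ).dens n)]
  calc (GenContFract.of θ).dens n * |θ - (GenContFract.of θ).convs n| ≤ (GenContFract.of θ).dens n *
      (1 / ((GenContFract.of θ).dens n * (GenContFract.of θ).dens (n+1))) := by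
        exact mul_le_mul_of_nonneg_left h (by linarith)
  _ = 1 / (GenContFract.of θ).dens (n+1) := by field_simp

lemma det (hθ : Irrational θ) (n : ℕ) :
    (GenContFract.of θ).nums n * (GenContFract.of θ).dens (n+1) -
      (GenContFract.of θ).dens n * (GenContFract.of θ).nums (n+1) = (-1 : ℝ)^(n+1) := by
  have h := (SimpContFract.of θ).determinant (notTerm hθ n)
  exact h

set_option maxHeartbeats 1000000 in
/-- Best approximation property: any `d·θ - c` with `1 ≤ d < dens (k+1)` is at least
`|er θ k|` in absolute value. -/
lemma best (hθ : Irrational θ) (k : ℕ) (d : ℕ) (c : ℤ) (hd1 : 1 ≤ d)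
    (hd2 : (d : ℝ) < (GenContFract.of θ).dens (k+1)) :
    |er θ k| ≤ |(d : ℝ) * θ - c| := by
  obtain ⟨Pk, hPk⟩ := num_int hθ k
  obtain ⟨Pk1, hPk1⟩ := num_int hθ (k+1)
  obtain ⟨Qk, hQk⟩ := den_nat hθ k
  obtain ⟨Qk1, hQk1⟩ := den_nat hθ (k+1)
  have hQkpos : (1:ℝ) ≤ (Qk:ℝ) := hQk ▸ den_pos hθ k
  have hQk1pos : (1:ℝ) ≤ (Qk1:ℝ) := hQk1 ▸ den_pos hθ (k+1)
  have hdet : (Pk:ℝ) * Qk1 - (Qk:ℝ) * Pk1 = (-1:ℝ)^(k+1) := by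
    rw [← hPk, ← hPk1, ← hQk, ← hQk1]; exact det hθ k
  have hek : er θ k = (Qk:ℝ) * θ - Pk := by rw [er, hPk, hQk]; ring
  have hek1 : er θ (k+1) = (Qk1:ℝ) * θ - Pk1 := by rw [er, hPk1, hQk1]; ring
  have hsq : (-1:ℝ)^(k+1) * (-1:ℝ)^(k+1) = 1 := by
    rcases neg_one_pow_eq_or ℝ (k+1) with hs | hs <;> rw [hs] <;> ring
  -- the integer coordinates of (c, d) in the basis (Pk, Qk), (Pk1, Qk1)
  have hsgn : ∃ s : ℤ, ((s:ℝ) = (-1:ℝ)^(k+1)) := by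
    rcases neg_one_pow_eq_or ℝ (k+1) with hs | hs
    · exact ⟨1, by rw [hs]; norm_num⟩
    · exact ⟨-1, by rw [hs]; norm_num⟩
  obtain ⟨s, hs⟩ := hsgn
  obtain ⟨A, hAr⟩ : ∃ A : ℤ, (A:ℝ) = (-1:ℝ)^(k+1) * ((c:ℝ) * Qk1 - (d:ℝ) * Pk1) :=
    ⟨s * (c * (Qk1:ℤ) - (d:ℤ) * Pk1), by push_cast; rw [hs]⟩
  obtain ⟨B, hBr⟩ : ∃ B : ℤ, (B:ℝ) = (-1:ℝ)^(k+1) * ((d:ℝ) * Pk - (c:ℝ) * Qk) :=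
    ⟨s * ((d:ℤ) * Pk - c * (Qk:ℤ)), by push_cast; rw [hs]⟩
  have hd' : (A:ℝ) * Qk + (B:ℝ) * Qk1 = d := by
    rw [hAr, hBr]
    linear_combination ((-1:ℝ)^(k+1) * d) * hdet + (d:ℝ) * hsq
  have hc' : (A:ℝ) * Pk + (B:ℝ) * Pk1 = c := by
    rw [hAr, hBr]
    linear_combination ((-1:ℝ)^(k+1) * c) * hdet + (c:ℝ) * hsq
  have hkey : (d:ℝ) * θ - c = (A:ℝ) * er θ k + (B:ℝ) * er θ (k+1) := by
    rw [hek, hek1]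
    linear_combination θ * hd'.symm - hc'.symm
  have hd1' : (1:ℝ) ≤ (d:ℝ) := by exact_mod_cast hd1
  rcases eq_or_ne B 0 with hB0 | hB0
  · -- d = A * Qk, so A ≥ 1
    have hdA : (A:ℝ) * Qk = d := by
      rw [← hd']; rw [hB0]; push_cast; ring
    have hApos : 1 ≤ A := by
      by_contra hA
      push_neg at hA
      have : (A:ℝ) ≤ 0 := by exact_mod_cast Int.lt_add_one_iff.mp (by omega)
      nlinarith
    have hA1 : (1:ℝ) ≤ (A:ℝ) := by exact_mod_cast hApos
    rw [hkey, hB0]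
    push_cast
    rw [zero_mul, add_zero, abs_mul]
    nlinarith [abs_nonneg (er θ k), le_abs_self (A:ℝ)]
  · rcases eq_or_ne A 0 with hA0 | hA0
    · -- d = B * Qk1 : contradiction with 1 ≤ d < Qk1
      exfalso
      have hdB : (B:ℝ) * Qk1 = d := by rw [← hd', hA0]; push_cast; ring
      have hQ1d : (d:ℝ) < Qk1 := by rw [← hQk1]; exact hd2
      rcases lt_trichotomy B 0 with h | h | h
      · have : (B:ℝ) ≤ -1 := by exact_mod_cast (by omega : B ≤ -1)
        nlinarith
      · exact hB0 h
      · have : (1:ℝ) ≤ (B:ℝ) := by exact_mod_cast (by omega : 1 ≤ B)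
        nlinarith
    · -- both nonzero: opposite signs
      have hQ1d : (d:ℝ) < Qk1 := by rw [← hQk1]; exact hd2
      have hAB : (A:ℝ) * B < 0 := by
        rcases lt_trichotomy A 0 with hA | hA | hA
        · rcases lt_trichotomy B 0 with hB | hB | hB
          · exfalso
            have h1 : (A:ℝ) ≤ -1 := by exact_mod_cast (by omega : A ≤ -1)
            have h2 : (B:ℝ) ≤ -1 := by exact_mod_cast (by omega : B ≤ -1)
            nlinarith
          · exact absurd hB hB0
          · have h1 : (A:ℝ) ≤ -1 := by exact_mod_cast (by omega : A ≤ -1)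
            have h2 : (1:ℝ) ≤ (B:ℝ) := by exact_mod_cast (by omega : 1 ≤ B)
            nlinarith
        · exact absurd hA hA0
        · rcases lt_trichotomy B 0 with hB | hB | hB
          · have h1 : (1:ℝ) ≤ (A:ℝ) := by exact_mod_cast (by omega : 1 ≤ A)
            have h2 : (B:ℝ) ≤ -1 := by exact_mod_cast (by omega : B ≤ -1)
            nlinarith
          · exact absurd hB hB0
          · exfalso
            have h1 : (1:ℝ) ≤ (A:ℝ) := by exact_mod_cast (by omega : 1 ≤ A)
            have h2 : (1:ℝ) ≤ (B:ℝ) := by exact_mod_cast (by omega : 1 ≤ B)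
            nlinarith
      have huv : ((A:ℝ) * er θ k) * ((B:ℝ) * er θ (k+1)) > 0 := by
        have := er_mul_neg hθ k
        nlinarith
      have hA1 : (1:ℝ) ≤ |(A:ℝ)| := by
        have : 1 ≤ |A| := Int.one_le_abs hA0
        calc (1:ℝ) ≤ (|A| : ℤ) := by exact_mod_cast this
        _ = |(A:ℝ)| := by push_cast; rfl
      have step1 : |er θ k| ≤ |(A:ℝ) * er θ k| := by
        rw [abs_mul]
        nlinarith [abs_nonneg (er θ k)]
      have step2 : |(A:ℝ) * er θ k| ≤ |(A:ℝ) * er θ k + (B:ℝ) * er θ (k+1)| := by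
        set u := (A:ℝ) * er θ k
        set v := (B:ℝ) * er θ (k+1)
        rcases lt_trichotomy u 0 with hu | hu | hu
        · have hv : v < 0 := by nlinarith
          rw [abs_of_neg hu, abs_of_neg (by linarith : u + v < 0)]
          linarith
        · simp [hu]
        · have hv : 0 < v := by nlinarith
          rw [abs_of_pos hu, abs_of_pos (by linarith : 0 < u + v)]
          linarith
      rw [hkey]
      exact le_trans step1 step2

/-- From the unboundedness hypothesis: arbitrarily large ratio `dens (k+1) / dens k`. -/
lemma big_quot (hθ : Irrational θ)
    (hub : ∀ B : ℝ, ∃ n : ℕ, ∃ a : ℝ,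
      (GenContFract.of θ).partDens.get? n = some a ∧ B < a) (B : ℝ) :
    ∃ k : ℕ, B * (GenContFract.of θ).dens k ≤ (GenContFract.of θ).dens (k+1) := by
  obtain ⟨n, a, ha, hBa⟩ := hub B
  obtain ⟨gp, hgp, hgpb⟩ := exists_s_b_of_partDen ha
  rcases n with - | m
  · -- dens 1 = gp.b
    refine ⟨0, ?_⟩
    have h1 : (GenContFract.of θ).dens 1 = gp.b := by
      have hrec := contsAux_recurrence hgp rfl rfl
      have ha1 : gp.a = 1 := of_partNum_eq_one (partNum_eq_s_a hgp)
      have : (GenContFract.of θ).dens 1 = ((GenContFract.of θ).contsAux 2).b := rfl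
      rw [this, hrec]
      simp [ha1]
    rw [h1, hgpb]
    simp
    linarith
  · refine ⟨m+1, ?_⟩
    have ha1 : gp.a = 1 := of_partNum_eq_one (partNum_eq_s_a hgp)
    have hrec := dens_recurrence hgp rfl rfl
    have hd0 : (0:ℝ) ≤ (GenContFract.of θ).dens m := by linarith [den_pos hθ m]
    have hd1 : (1:ℝ) ≤ (GenContFract.of θ).dens (m+1) := den_pos hθ (m+1)
    rw [hrec, ha1, hgpb]
    nlinarith

/-! ### Sturmian words: shift lemmas -/

lemma floor_jump {t e : ℝ} (he : |e| < 1) (h : ⌊t + e⌋ ≠ ⌊t⌋) :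
    ∃ c : ℤ, min e 0 < (c : ℝ) - t ∧ (c : ℝ) - t ≤ max e 0 := by
  rcases le_or_gt 0 e with he0 | he0
  · -- e ≥ 0 : floor jumps up
    have hmono : ⌊t⌋ ≤ ⌊t + e⌋ := Int.floor_le_floor (by linarith)
    have hlt : ⌊t⌋ + 1 ≤ ⌊t + e⌋ := by omega
    refine ⟨⌊t⌋ + 1, ?_, ?_⟩
    · have := Int.lt_floor_add_one t
      have hmin : min e 0 = 0 := min_eq_right he0
      rw [hmin]; push_cast; linarith
    · have := Int.floor_le (t + e)
      have : ((⌊t⌋:ℝ) + 1) ≤ t + e := by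
        calc ((⌊t⌋:ℝ) + 1) = ((⌊t⌋ + 1 : ℤ) : ℝ) := by push_cast; ring
        _ ≤ (⌊t + e⌋ : ℝ) := by exact_mod_cast hlt
        _ ≤ t + e := Int.floor_le _
      have hmax : max e 0 = e := max_eq_left he0
      rw [hmax]; push_cast; linarith
  · -- e < 0 : floor jumps down
    have hmono : ⌊t + e⌋ ≤ ⌊t⌋ := Int.floor_le_floor (by linarith)
    have hlt : ⌊t + e⌋ + 1 ≤ ⌊t⌋ := by omega
    refine ⟨⌊t⌋, ?_, ?_⟩
    · have h1 : t + e < (⌊t + e⌋ : ℝ) + 1 := Int.lt_floor_add_one _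
      have h2 : ((⌊t + e⌋:ℝ) + 1) ≤ (⌊t⌋ : ℝ) := by exact_mod_cast hlt
      have hmin : min e 0 = e := min_eq_left (le_of_lt he0)
      rw [hmin]; linarith
    · have := Int.floor_le t
      have hmax : max e 0 = 0 := max_eq_right (le_of_lt he0)
      rw [hmax]; linarith

/-- at most one "floor jump" index in a window where the spacing estimate holds -/
lemma no_two_bad {θ e σ : ℝ} {M : ℕ} (w : ℕ → ℝ)
    (hσ : σ = 1 ∨ σ = -1)
    (hw : ∀ j j' : ℕ, w j - w j' = σ * ((j:ℝ) - (j':ℝ)) * θ)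
    (hne : e ≠ 0) (he1 : |e| < 1)
    (hsp : ∀ d : ℕ, 1 ≤ d → d ≤ M → ∀ c : ℤ, |e| ≤ |(d:ℝ) * θ - c|) :
    ∃ j₀ : ℕ, ∀ j ≤ M, j ≠ j₀ → ⌊w j + σ * e⌋ = ⌊w j⌋ := by
  have habs : |σ * e| = |e| := by
    rcases hσ with h | h <;> rw [h] <;> simp
  have hσe1 : |σ * e| < 1 := by rw [habs]; exact he1
  have hpair : ∀ j j' : ℕ, j < j' → j' ≤ M →
      ⌊w j + σ * e⌋ ≠ ⌊w j⌋ → ⌊w j' + σ * e⌋ ≠ ⌊w j'⌋ → False := by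
    intro j j' hjj' hj'M hbad hbad'
    obtain ⟨c, hc1, hc2⟩ := floor_jump hσe1 hbad
    obtain ⟨c', hc1', hc2'⟩ := floor_jump hσe1 hbad'
    set d : ℕ := j' - j with hd_def
    have hd1 : 1 ≤ d := by omega
    have hdM : d ≤ M := by omega
    have hdr : ((d:ℝ)) = (j':ℝ) - (j:ℝ) := by
      push_cast [hd_def]
      have : (j:ℝ) ≤ (j':ℝ) := by exact_mod_cast le_of_lt hjj'
      push_cast [Nat.cast_sub (le_of_lt hjj')]
      ring
    have hwd : w j - w j' = -(σ * (d:ℝ) * θ) := by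
      rw [hw j j', hdr]; ring
    have hmm : max (σ*e) 0 - min (σ*e) 0 = |e| := by
      rw [← habs]
      rcases le_or_gt 0 (σ*e) with h | h
      · rw [max_eq_left h, min_eq_right h, abs_of_nonneg h]; ring
      · rw [max_eq_right (le_of_lt h), min_eq_left (le_of_lt h), abs_of_neg h]; ring
    have hdiff : |((c:ℝ) - w j) - ((c':ℝ) - w j')| < |e| := by
      rw [abs_lt]
      constructor <;> nlinarith
    rcases hσ with hσ1 | hσ1
    · have key : ((c:ℝ) - w j) - ((c':ℝ) - w j') = ((d:ℝ) * θ - ((c':ℝ) - (c:ℝ))) := by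
        have h' := hwd
        rw [hσ1] at h'
        linear_combination -h'
      have hs := hsp d hd1 hdM (c' - c)
      push_cast at hs
      rw [key] at hdiff
      linarith
    · have key : ((c:ℝ) - w j) - ((c':ℝ) - w j') = -((d:ℝ) * θ - ((c:ℝ) - (c':ℝ))) := by
        have h' := hwd
        rw [hσ1] at h'
        linear_combination -h'
      have hs := hsp d hd1 hdM (c - c')
      push_cast at hs
      rw [key, abs_neg] at hdiff
      linarith
  by_cases hex : ∃ j ≤ M, ⌊w j + σ * e⌋ ≠ ⌊w j⌋
  · obtain ⟨j₀, hj₀M, hj₀⟩ := hex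
    refine ⟨j₀, fun j hj hne' => ?_⟩
    by_contra hbad
    rcases lt_or_gt_of_ne hne' with h | h
    · exact hpair j j₀ h hj₀M hbad hj₀
    · exact hpair j₀ j h hj hj₀ hbad
  · push_neg at hex
    exact ⟨M + 1, fun j hj _ => hex j hj⟩


lemma shift_floor {θ ρ e : ℝ} {q : ℕ} {p : ℤ} (he : (q:ℝ) * θ = (p:ℝ) + e) (k : ℕ)
    (h1 : ⌊((k:ℝ)+1) * θ + ρ + e⌋ = ⌊((k:ℝ)+1) * θ + ρ⌋)
    (h2 : ⌊((k:ℝ)+2) * θ + ρ + e⌋ = ⌊((k:ℝ)+2) * θ + ρ⌋) :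
    sturmianFloor θ ρ (k + q) = sturmianFloor θ ρ k := by
  unfold sturmianFloor
  have e2 : (((k+q:ℕ):ℝ) + 2) * θ + ρ = (((k:ℝ)+2) * θ + ρ + e) + (p:ℝ) := by
    push_cast
    linear_combination he
  have e1 : (((k+q:ℕ):ℝ) + 1) * θ + ρ = (((k:ℝ)+1) * θ + ρ + e) + (p:ℝ) := by
    push_cast
    linear_combination he
  rw [e1, e2, Int.floor_add_intCast, Int.floor_add_intCast, h1, h2]
  ring

lemma shift_ceil {θ ρ e : ℝ} {q : ℕ} {p : ℤ} (he : (q:ℝ) * θ = (p:ℝ) + e) (k : ℕ)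
    (h1 : ⌊-(((k:ℝ)+1) * θ + ρ) + -e⌋ = ⌊-(((k:ℝ)+1) * θ + ρ)⌋)
    (h2 : ⌊-(((k:ℝ)+2) * θ + ρ) + -e⌋ = ⌊-(((k:ℝ)+2) * θ + ρ)⌋) :
    sturmianCeil θ ρ (k + q) = sturmianCeil θ ρ k := by
  unfold sturmianCeil
  have hce : ∀ t : ℝ, ⌈t⌉ = -⌊-t⌋ := fun t => by rw [show (⌈t⌉:ℤ) = ⌈-(-t)⌉ from by rw [neg_neg], Int.ceil_neg]
  have e2 : (((k+q:ℕ):ℝ) + 2) * θ + ρ = (((k:ℝ)+2) * θ + ρ + e) + (p:ℝ) := by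
    push_cast
    linear_combination he
  have e1 : (((k+q:ℕ):ℝ) + 1) * θ + ρ = (((k:ℝ)+1) * θ + ρ + e) + (p:ℝ) := by
    push_cast
    linear_combination he
  rw [e1, e2, hce, hce, hce, hce]
  have n2 : -((((k:ℝ)+2) * θ + ρ + e) + (p:ℝ)) = (-(((k:ℝ)+2) * θ + ρ) + -e) + (-p:ℤ) := by
    push_cast; ring
  have n1 : -((((k:ℝ)+1) * θ + ρ + e) + (p:ℝ)) = (-(((k:ℝ)+1) * θ + ρ) + -e) + (-p:ℤ) := by
    push_cast; ring
  rw [n1, n2, Int.floor_add_intCast, Int.floor_add_intCast, h1, h2]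
  ring

/-- The combined periodicity lemma: under the spacing hypothesis there is at most one bad
index, away from which `x` is periodic with period `q`. -/
lemma one_bad {θ ρ e : ℝ} {q M : ℕ} {p : ℤ} {x : ℕ → ℤ}
    (he : (q:ℝ) * θ = (p:ℝ) + e) (hne : e ≠ 0) (he1 : |e| < 1)
    (hsp : ∀ d : ℕ, 1 ≤ d → d ≤ M → ∀ c : ℤ, |e| ≤ |(d:ℝ) * θ - c|)
    (hx : x = sturmianFloor θ ρ ∨ x = sturmianCeil θ ρ) :
    ∃ j₀ : ℕ, ∀ k : ℕ, k + 2 ≤ M → k + 1 ≠ j₀ → k + 2 ≠ j₀ → x (k + q) = x k := by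
  rcases hx with rfl | rfl
  · -- floor case : σ = 1, w j = jθ + ρ
    obtain ⟨j₀, hj₀⟩ := no_two_bad (θ := θ) (e := e) (σ := 1) (M := M)
      (fun j => (j:ℝ) * θ + ρ) (Or.inl rfl)
      (fun j j' => by push_cast; ring) hne he1 hsp
    refine ⟨j₀, fun k hkM hk1 hk2 => ?_⟩
    apply shift_floor he
    · have := hj₀ (k+1) (by omega) hk1
      rw [one_mul] at this
      push_cast at this ⊢
      convert this using 3 <;> ring
    · have := hj₀ (k+2) (by omega) hk2
      rw [one_mul] at this
      push_cast at this ⊢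
      convert this using 3 <;> ring
  · -- ceil case : σ = -1, w j = -(jθ + ρ)
    obtain ⟨j₀, hj₀⟩ := no_two_bad (θ := θ) (e := e) (σ := -1) (M := M)
      (fun j => -((j:ℝ) * θ + ρ)) (Or.inr rfl)
      (fun j j' => by push_cast; ring) hne he1 hsp
    refine ⟨j₀, fun k hkM hk1 hk2 => ?_⟩
    apply shift_ceil he
    · have := hj₀ (k+1) (by omega) hk1
      rw [neg_one_mul] at this
      push_cast at this ⊢
      convert this using 3 <;> ring
    · have := hj₀ (k+2) (by omega) hk2
      rw [neg_one_mul] at this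
      push_cast at this ⊢
      convert this using 3 <;> ring

/-! ### Pigeonhole and spacing helpers -/

lemma sturmian_vals {θ ρ : ℝ} (h0 : 0 < θ) (h1 : θ < 1) {x : ℕ → ℤ}
    (hx : x = sturmianFloor θ ρ ∨ x = sturmianCeil θ ρ) (k : ℕ) : x k = 0 ∨ x k = 1 := by
  rcases hx with rfl | rfl
  · unfold sturmianFloor
    have ha : ((k:ℝ)+2) * θ + ρ = (((k:ℝ)+1) * θ + ρ) + θ := by ring
    set a := ((k:ℝ)+1) * θ + ρ
    rw [ha]
    have hm1 : ⌊a⌋ ≤ ⌊a + θ⌋ := Int.floor_le_floor (by linarith)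
    have hm2 : ⌊a + θ⌋ ≤ ⌊a + 1⌋ := Int.floor_le_floor (by linarith)
    rw [show a + (1:ℝ) = a + (1:ℤ) by push_cast; ring, Int.floor_add_intCast] at hm2
    omega
  · unfold sturmianCeil
    have ha : ((k:ℝ)+2) * θ + ρ = (((k:ℝ)+1) * θ + ρ) + θ := by ring
    set a := ((k:ℝ)+1) * θ + ρ
    rw [ha]
    have hm1 : ⌈a⌉ ≤ ⌈a + θ⌉ := Int.ceil_le_ceil (by linarith)
    have hm2 : ⌈a + θ⌉ ≤ ⌈a + 1⌉ := Int.ceil_le_ceil (by linarith)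
    rw [show a + (1:ℝ) = a + (1:ℤ) by push_cast; ring, Int.ceil_add_intCast] at hm2
    omega

lemma rc_mem_nonempty {x : ℕ → ℤ} (hv : ∀ k, x k = 0 ∨ x k = 1) (n : ℕ) :
    ∃ m, ∃ j, j + n < m ∧ ∀ t < n, x (j + t) = x (m - n + t) := by
  set F : Fin (2^n + 1) → (Fin n → Bool) := fun k t => decide (x (k.1 + t.1) = 1) with hF
  have hcard : Fintype.card (Fin n → Bool) < Fintype.card (Fin (2^n + 1)) := by
    simp [Fintype.card_fun]
  obtain ⟨a, b, hab, hFab⟩ := Fintype.exists_ne_map_eq_of_card_lt F hcard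
  have key : ∀ (a b : Fin (2^n+1)), a.1 < b.1 → F a = F b →
      ∃ m, ∃ j, j + n < m ∧ ∀ t < n, x (j + t) = x (m - n + t) := by
    intro a b hlt hfab
    refine ⟨b.1 + n, a.1, by omega, fun t ht => ?_⟩
    have h1 : F a ⟨t, ht⟩ = F b ⟨t, ht⟩ := by rw [hfab]
    simp only [hF, decide_eq_decide] at h1
    have h2 : b.1 + n - n + t = b.1 + t := by omega
    rw [h2]
    rcases hv (a.1 + t) with h | h <;> rcases hv (b.1 + t) with h' | h' <;>
      rw [h, h'] at h1 ⊢ <;> first | rfl | (exfalso; revert h1; norm_num)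
  rcases Nat.lt_or_ge a.1 b.1 with h | h
  · exact key a b h hFab
  · have : b.1 < a.1 := by
      rcases Nat.lt_or_ge b.1 a.1 with h' | h'
      · exact h'
      · exact absurd (Fin.ext (by omega : a.1 = b.1)) hab
    exact key b a this hFab.symm

lemma rc_gt {x : ℕ → ℤ} (hv : ∀ k, x k = 0 ∨ x k = 1) (n : ℕ) : n < rc n x := by
  have hne : {m | ∃ j, j + n < m ∧ ∀ t < n, x (j + t) = x (m - n + t)}.Nonempty :=
    rc_mem_nonempty hv n
  have hmem := Nat.sInf_mem hne
  unfold rc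
  obtain ⟨j, hj, -⟩ := hmem
  omega

lemma lin_ne {θ : ℝ} (hθ : Irrational θ) (i : ℕ) (hi : 1 ≤ i) (c : ℤ) :
    (i:ℝ) * θ - c ≠ 0 := by
  intro h
  apply hθ
  refine ⟨(c:ℚ) / (i:ℚ), ?_⟩
  have hi0 : (i:ℝ) ≠ 0 := by positivity
  push_cast
  field_simp
  linarith

lemma round_nearest (y : ℝ) (c : ℤ) : |y - round y| ≤ |y - c| := by
  by_cases hc : c = round y
  · rw [hc]
  · have h1 : |y - round y| ≤ 1/2 := abs_sub_round y
    have h2 : (1:ℝ) ≤ |(c:ℝ) - (round y : ℤ)| := by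
      have : 1 ≤ |c - round y| := Int.one_le_abs (sub_ne_zero.mpr hc)
      calc (1:ℝ) = ((1:ℤ):ℝ) := by norm_num
      _ ≤ ((|c - round y| : ℤ) : ℝ) := by exact_mod_cast this
      _ = |(c:ℝ) - (round y : ℤ)| := by push_cast; rfl
    have h3 : |(c:ℝ) - (round y : ℤ)| ≤ |(c:ℝ) - y| + |y - round y| := abs_sub_le _ y _
    have h4 : |(c:ℝ) - y| = |y - c| := abs_sub_comm _ _
    linarith

lemma spacing_exists {θ : ℝ} (hθ : Irrational θ) (N : ℕ) :
    ∃ μ : ℝ, 0 < μ ∧ ∀ i : ℕ, 1 ≤ i → i ≤ N → ∀ c : ℤ, μ ≤ |(i:ℝ) * θ - c| := by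
  induction N with
  | zero => exact ⟨1, one_pos, fun i h1 h2 => by omega⟩
  | succ N ih =>
    obtain ⟨μ, hμ, hsp⟩ := ih
    set y : ℝ := ((N+1:ℕ):ℝ) * θ with hy
    have hm : 0 < |y - round y| := by
      rw [abs_pos]
      exact lin_ne hθ (N+1) (by omega) (round y)
    refine ⟨min μ |y - round y|, lt_min hμ hm, fun i h1 h2 c => ?_⟩
    rcases Nat.lt_or_ge i (N+1) with h | h
    · exact le_trans (min_le_left _ _) (hsp i h1 (by omega) c)
    · have hiN : i = N + 1 := by omega
      subst hiN
      calc min μ |y - round y| ≤ |y - round y| := min_le_right _ _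
      _ ≤ |y - (c:ℝ)| := round_nearest y c
      _ = |(((N+1:ℕ)):ℝ) * θ - c| := by rw [hy]

set_option maxHeartbeats 4000000 in
/-- Main construction: frequently `rc n x ≤ (1+ε) n`. -/
lemma main_freq {θ : ℝ} (hθ : Irrational θ)
    (hub : ∀ B : ℝ, ∃ n : ℕ, ∃ a : ℝ,
      (GenContFract.of θ).partDens.get? n = some a ∧ B < a)
    {x : ℕ → ℤ} {ρ : ℝ} (hx : x = sturmianFloor θ ρ ∨ x = sturmianCeil θ ρ)
    (ε : ℝ) (hε : 0 < ε) (N₀ : ℕ) :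
    ∃ n : ℕ, N₀ ≤ n ∧ 1 ≤ n ∧ (rc n x : ℝ) ≤ (1+ε) * n := by
  classical
  set c₁ : ℕ := ⌈1/ε⌉₊ + 1 with hc₁def
  have hc₁R : 1/ε ≤ (c₁:ℝ) := by
    calc 1/ε ≤ (⌈1/ε⌉₊:ℝ) := Nat.le_ceil _
    _ ≤ (c₁:ℝ) := by exact_mod_cast Nat.le_succ ⌈1/ε⌉₊
  have hc₁2 : 2 ≤ c₁ := by
    have : 1 ≤ ⌈1/ε⌉₊ := Nat.one_le_ceil_iff.mpr (by positivity)
    omega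
  have hc₁R2 : (2:ℝ) ≤ (c₁:ℝ) := by exact_mod_cast hc₁2
  have hεc₁ : 1 ≤ ε * c₁ := by
    have h := mul_le_mul_of_nonneg_left hc₁R (le_of_lt hε)
    rwa [mul_one_div_cancel (ne_of_gt hε)] at h
  obtain ⟨μ, hμ, hμsp⟩ := spacing_exists hθ N₀
  set B : ℝ := ((c₁:ℝ)+5)^2 + 1/μ with hBdef
  have hBpow : (0:ℝ) < ((c₁:ℝ)+5)^2 := by positivity
  have hBc : ((c₁:ℝ)+5)^2 ≤ B := le_add_of_nonneg_right (by positivity)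
  have hBpos : (0:ℝ) < B := by positivity
  have hBμ : 1/B < μ := by
    have h1 : 1/μ < B := by nlinarith
    rw [div_lt_iff₀ hBpos]
    have h2 := mul_lt_mul_of_pos_left h1 hμ
    rwa [mul_one_div_cancel (ne_of_gt hμ)] at h2
  have hB2 : (2:ℝ) ≤ B := by nlinarith
  obtain ⟨k, hk⟩ := big_quot hθ hub B
  obtain ⟨P, hP⟩ := num_int hθ k
  obtain ⟨Q, hQ⟩ := den_nat hθ k
  obtain ⟨Q1, hQ1⟩ := den_nat hθ (k+1)
  have hQ1le : (1:ℝ) ≤ (Q:ℝ) := hQ ▸ den_pos hθ k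
  have hQ11le : (1:ℝ) ≤ (Q1:ℝ) := hQ1 ▸ den_pos hθ (k+1)
  have hQnat : 1 ≤ Q := by exact_mod_cast hQ1le
  have hQ1nat : 1 ≤ Q1 := by exact_mod_cast hQ11le
  set e := er θ k with hedef
  have he : (Q:ℝ) * θ = (P:ℝ) + e := by rw [hedef, er, hQ, hP]; ring
  have hene : e ≠ 0 := er_ne hθ k
  have hBQ : B * Q ≤ Q1 := by rw [hQ, hQ1] at hk; exact hk
  have hBQpos : (0:ℝ) < B * Q := by nlinarith
  have heb : |e| ≤ 1/(B*Q) := by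
    calc |e| ≤ 1 / (GenContFract.of θ).dens (k+1) := er_bound hθ k
    _ = 1/(Q1:ℝ) := by rw [hQ1]
    _ ≤ 1/(B*Q) := by apply one_div_le_one_div_of_le hBQpos hBQ
  have heB : |e| ≤ 1/B := by
    calc |e| ≤ 1/(B*Q) := heb
    _ ≤ 1/B := by
      apply one_div_le_one_div_of_le hBpos
      nlinarith
  have he1 : |e| < 1 := by
    have : 1/B ≤ 1/2 := by
      apply one_div_le_one_div_of_le (by norm_num) hB2
    linarith
  have heμ : |e| < μ := lt_of_le_of_lt heB hBμ
  have hQN : N₀ < Q := by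
    by_contra hcon
    push_neg at hcon
    have h1 := hμsp Q hQnat hcon P
    have h2 : (Q:ℝ) * θ - (P:ℝ) = e := by linarith [he]
    rw [h2] at h1
    linarith
  set M := Q1 - 1 with hMdef
  have hMr : (M:ℝ) = (Q1:ℝ) - 1 := by
    rw [hMdef]
    push_cast [Nat.cast_sub hQ1nat]
    ring
  have hsp : ∀ d : ℕ, 1 ≤ d → d ≤ M → ∀ c : ℤ, |e| ≤ |(d:ℝ) * θ - c| := by
    intro d h1 h2 c
    apply best hθ k d c h1
    rw [hQ1]
    have : (d:ℝ) ≤ (M:ℝ) := by exact_mod_cast h2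
    linarith [hMr]
  obtain ⟨j₀, hj₀⟩ := one_bad he hene he1 hsp hx
  set T := Q * c₁ with hTdef
  have hTR : (T:ℝ) = (Q:ℝ) * (c₁:ℝ) := by rw [hTdef]; push_cast; ring
  have hMbig : (T:ℝ) + Q + 5 ≤ (M:ℝ) := by
    rw [hMr, hTR]
    have h1 : ((c₁:ℝ)+5)^2 * Q ≤ B * Q :=
      mul_le_mul_of_nonneg_right hBc (Nat.cast_nonneg Q)
    nlinarith [mul_nonneg (by linarith : (0:ℝ) ≤ (Q:ℝ) - 1)
      (by linarith : (0:ℝ) ≤ (c₁:ℝ))]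
  have hMnat : T + Q + 5 ≤ M := by exact_mod_cast hMbig
  have hεinv : 1/(c₁:ℝ) ≤ ε := by
    rw [div_le_iff₀ (by positivity : (0:ℝ) < (c₁:ℝ))]
    linarith [hεc₁]
  by_cases hcase : 1 ≤ j₀ ∧ j₀ ≤ T + 1
  · -- bad block near the start : skip it
    set s := j₀ + 1 with hsdef
    set n := M - 2 - s with hndef
    have hsT : s ≤ T + 2 := by omega
    have hnM : n + s + 2 = M := by omega
    set m := s + n + Q with hmdef
    have hmem : m ∈ {m' | ∃ j, j + n < m' ∧ ∀ t < n, x (j + t) = x (m' - n + t)} := by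
      refine ⟨s, by omega, fun t ht => ?_⟩
      have hidx : m - n + t = (s + t) + Q := by omega
      rw [hidx]
      exact (hj₀ (s+t) (by omega) (by omega) (by omega)).symm
    have hrc : rc n x ≤ m := Nat.sInf_le hmem
    have hnN : N₀ ≤ n ∧ 1 ≤ n := by
      constructor <;> omega
    refine ⟨n, hnN.1, hnN.2, ?_⟩
    have hrcR : (rc n x : ℝ) ≤ (m:ℝ) := by exact_mod_cast hrc
    have hmR : (m:ℝ) = (s:ℝ) + (n:ℝ) + (Q:ℝ) := by rw [hmdef]; push_cast; ring
    have hnR : (n:ℝ) + (s:ℝ) + 2 = (M:ℝ) := by exact_mod_cast hnM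
    have hsR : (s:ℝ) ≤ (T:ℝ) + 2 := by exact_mod_cast hsT
    have hn_lb : B * Q - (Q:ℝ)*(c₁:ℝ) - 5 ≤ (n:ℝ) := by
      have h' : B * Q ≤ (Q1:ℝ) := hBQ
      linarith [hMr, hTR, hnR, hsR]
    have hc₁pos : (0:ℝ) < (c₁:ℝ) := by positivity
    have hεn : (s:ℝ) + (Q:ℝ) ≤ ε * n := by
      have hnpos : (0:ℝ) ≤ (n:ℝ) := Nat.cast_nonneg n
      have hBQ2 : ((c₁:ℝ)+5)^2 * Q ≤ B * Q :=
        mul_le_mul_of_nonneg_right hBc (Nat.cast_nonneg Q)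
      have hQc : ((c₁:ℝ)+5)^2 * Q - (Q:ℝ)*(c₁:ℝ) - 5 ≤ (n:ℝ) := by linarith
      have key : (c₁:ℝ) * ((Q:ℝ)*(c₁:ℝ) + Q + 2) ≤ (n:ℝ) := by
        nlinarith [mul_nonneg (by linarith : (0:ℝ) ≤ (Q:ℝ) - 1)
          (by linarith : (0:ℝ) ≤ (c₁:ℝ))]
      have h3 : (c₁:ℝ) * ((s:ℝ) + (Q:ℝ)) ≤ (c₁:ℝ) * ((Q:ℝ)*(c₁:ℝ) + Q + 2) := by
        have : (s:ℝ) ≤ (Q:ℝ)*(c₁:ℝ) + 2 := by linarith [hsR, hTR]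
        nlinarith
      have h4 : (c₁:ℝ) * ((s:ℝ) + (Q:ℝ)) ≤ (n:ℝ) := le_trans h3 key
      have h5 : (s:ℝ) + (Q:ℝ) ≤ (n:ℝ) / (c₁:ℝ) := by
        rw [le_div_iff₀ hc₁pos]
        nlinarith
      have h6 : (n:ℝ)/(c₁:ℝ) ≤ ε * n := by
        rw [div_le_iff₀ hc₁pos]
        nlinarith [mul_le_mul_of_nonneg_left hεc₁ hnpos]
      linarith
    rw [hmR] at hrcR
    nlinarith [hεn]
  · -- no bad index among the first T letters
    have hj₀' : j₀ = 0 ∨ T + 1 < j₀ := by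
      by_cases h0 : j₀ = 0
      · exact Or.inl h0
      · right
        by_contra hcon
        push_neg at hcon
        exact hcase ⟨by omega, by omega⟩
    set n := T with hndef
    set m := T + Q with hmdef
    have hmem : m ∈ {m' | ∃ j, j + n < m' ∧ ∀ t < n, x (j + t) = x (m' - n + t)} := by
      refine ⟨0, by omega, fun t ht => ?_⟩
      have hidx : m - n + t = t + Q := by omega
      rw [hidx, zero_add]
      exact (hj₀ t (by omega) (by omega) (by omega)).symm
    have hrc : rc n x ≤ m := Nat.sInf_le hmem
    have hTQ : Q ≤ T := by
      calc Q = Q * 1 := by omega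
      _ ≤ Q * c₁ := by exact Nat.mul_le_mul_left Q (by omega)
    refine ⟨n, by omega, by omega, ?_⟩
    have hrcR : (rc n x : ℝ) ≤ (m:ℝ) := by exact_mod_cast hrc
    have hmR : (m:ℝ) = (T:ℝ) + (Q:ℝ) := by rw [hmdef]; push_cast; ring
    have hQT : (Q:ℝ) ≤ ε * T := by
      rw [hTR]
      nlinarith [mul_le_mul_of_nonneg_left hεc₁ (Nat.cast_nonneg Q : (0:ℝ) ≤ (Q:ℝ))]
    rw [hmR] at hrcR
    have : (n:ℝ) = (T:ℝ) := by rw [hndef]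
    nlinarith

end BK

theorem repExp_eq_one_of_unbounded_partial_quotients (θ : ℝ) (hθ : Irrational θ)
    (h0 : 0 < θ) (h1 : θ < 1)
    (hub : ∀ B : ℝ, ∃ n : ℕ, ∃ a : ℝ,
      (GenContFract.of θ).partDens.get? n = some a ∧ B < a)
    (x : ℕ → ℤ) (hx : ∃ ρ : ℝ, x = sturmianFloor θ ρ ∨ x = sturmianCeil θ ρ) :
    repExp x = 1 := by
  obtain ⟨ρ, hxρ⟩ := hx
  have hval : ∀ k, x k = 0 ∨ x k = 1 := BK.sturmian_vals h0 h1 hxρ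
  have hlow : (1:EReal) ≤ repExp x := by
    rw [repExp]
    refine Filter.le_liminf_of_le (by isBoundedDefault) ?_
    filter_upwards [Filter.eventually_ge_atTop 1] with n hn
    have hgt := BK.rc_gt hval n
    have hnR : (0:ℝ) < (n:ℝ) := by exact_mod_cast hn
    have h2 : (1:ℝ) ≤ (rc n x : ℝ)/(n:ℝ) := by
      rw [le_div_iff₀ hnR, one_mul]
      exact_mod_cast le_of_lt hgt
    have h3 : ((1:ℝ):EReal) ≤ (((rc n x : ℝ)/(n:ℝ) : ℝ) : EReal) := EReal.coe_le_coe_iff.mpr h2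
    simpa using h3
  have hupp : repExp x ≤ 1 := by
    by_contra hcon
    push_neg at hcon
    obtain ⟨r, hr1, hr2⟩ := EReal.exists_between_coe_real hcon
    have hr1' : (1:ℝ) < r := by exact_mod_cast hr1
    have hfreq : ∃ᶠ n in atTop, (((rc n x : ℝ)/(n:ℝ) : ℝ) : EReal) ≤ (r:EReal) := by
      rw [Filter.frequently_atTop]
      intro N
      obtain ⟨n, hnN, hn1, hb⟩ := BK.main_freq hθ hub hxρ (r - 1) (by linarith) N
      refine ⟨n, hnN, ?_⟩
      have hnpos : (0:ℝ) < (n:ℝ) := by exact_mod_cast hn1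
      have hle : (rc n x : ℝ)/(n:ℝ) ≤ r := by
        rw [div_le_iff₀ hnpos]
        calc (rc n x : ℝ) ≤ (1 + (r-1)) * n := hb
        _ = r * n := by ring
      exact EReal.coe_le_coe_iff.mpr hle
    have hlim := Filter.liminf_le_of_frequently_le' hfreq
    have : repExp x ≤ (r:EReal) := hlim
    exact absurd (lt_of_le_of_lt this hr2) (lt_irrefl _)
  exact le_antisymm hupp hlow
end

section
/- Let b ≥ 2 be an integer and x = x₁x₂… an infinite word over {0, 1, …, b−1} which is not eventually periodic, and set ξ = Σ_{k≥1} x_k / b^k. If rep(x) = 1, then ξ is a Liouville number; and if 1 < rep(x) < ∞, then the irrationality exponent of ξ satisfies μ(ξ) ≥ rep(x) / (rep(x) − 1). -/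
open Filter

/-- the irrationality exponent of a real number `ξ`, as an extended real: the supremum
of the real numbers `μ` such that `|ξ - p/q| < 1/q^μ` has infinitely many rational
solutions `p/q`.  A real number `ξ` is a Liouville number when `irrExp ξ = ⊤`. -/
noncomputable def irrExp (ξ : ℝ) : EReal :=
  sSup ((fun m : ℝ => (m : EReal)) ''
    {m : ℝ | {q : ℚ | |ξ - (q : ℝ)| < 1 / (q.den : ℝ) ^ m}.Infinite})

/-!
Write `ξ = 0.x₀x₁x₂…` in base `b`. If the prefix of length `m = r(n,x)` contains some factor of
length `n` at two positions `j < s = m - n`, then the tails `b^j ξ mod 1` and `b^s ξ mod 1`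
agree to `n` digits, so `(b^s - b^j) ξ` lies within `b^(-n)` of an integer `p`. With
`Q = b^s - b^j < b^s` this gives `|ξ - p/Q| ≤ b^(-n)/Q < 1/Q^μ` as soon as `m/n < μ/(μ-1)`,
which happens for infinitely many `n` when `rep(x) < μ/(μ-1)`. Since `x` is not eventually
periodic, `ξ` is irrational (a rational `ξ` has finitely many distinct tails, and a tail
determines all later digits), so these approximations are infinitely many distinct rationals.
-/

lemma rc_comp_of_injective {A B : Type*} {f : A → B} (hf : Function.Injective f) (n : ℕ)
    (x : ℕ → A) : rc n (f ∘ x) = rc n x := by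
  simp only [rc, Function.comp_apply, hf.eq_iff]

lemma repExp_comp_of_injective {A B : Type*} {f : A → B} (hf : Function.Injective f)
    (x : ℕ → A) : repExp (f ∘ x) = repExp x := by
  simp only [repExp, rc_comp_of_injective hf]

lemma EventuallyPeriodic.comp {A B : Type*} {x : ℕ → A} (h : EventuallyPeriodic x) (f : A → B) :
    EventuallyPeriodic (f ∘ x) := by
  obtain ⟨p, hp, N, hN⟩ := h
  exact ⟨p, hp, N, fun n hn => congrArg f (hN n hn)⟩

lemma rc_spec {A : Type*} [Finite A] (x : ℕ → A) (n : ℕ) :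
    ∃ j, j + n < rc n x ∧ ∀ t < n, x (j + t) = x (rc n x - n + t) := by
  refine Nat.sInf_mem (s := {m | ∃ j, j + n < m ∧ ∀ t < n, x (j + t) = x (m - n + t)}) ?_
  obtain ⟨j, k, hjk, h⟩ := Set.finite_univ.exists_lt_map_eq_of_forall_mem
    (f := fun k (t : Fin n) => x (k + t)) fun _ => Set.mem_univ _
  exact ⟨k + n, j, by omega, fun t ht => by simpa using congrFun h ⟨t, ht⟩⟩

lemma abs_sub_rat_lt_one_div_den_rpow {ξ μ : ℝ} {p : ℤ} {Q : ℕ} (hμ : 0 ≤ μ) (hQ : 0 < Q)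
    (h : |ξ - p / Q| < 1 / (Q : ℝ) ^ μ) :
    |ξ - ((p / Q : ℚ) : ℝ)| < 1 / ((p / Q : ℚ).den : ℝ) ^ μ := by
  have hden : ((p / Q : ℚ).den : ℝ) ≤ Q := by
    have hdvd : ((p / Q : ℚ).den : ℤ) ∣ Q := by simpa [Rat.divInt_eq_div] using Rat.den_dvd p Q
    exact_mod_cast Nat.le_of_dvd hQ (by exact_mod_cast hdvd)
  push_cast
  refine h.trans_le (one_div_le_one_div_of_le (by positivity) ?_)
  exact Real.rpow_le_rpow (by positivity) hden hμ

lemma inv_pow_div_lt_one_div_rpow {B Q μ : ℝ} {s n : ℕ} (hB : 1 < B) (hQ : 0 < Q)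
    (hQs : Q < B ^ s) (hμ : 1 < μ) (hsn : s * (μ - 1) ≤ n) :
    (B ^ n)⁻¹ / Q < 1 / Q ^ μ := by
  have hpow : Q ^ (μ - 1) < B ^ n := calc
    Q ^ (μ - 1) < (B ^ s) ^ (μ - 1) := Real.rpow_lt_rpow hQ.le hQs (by linarith)
    _ = B ^ (s * (μ - 1)) := by rw [← Real.rpow_natCast, ← Real.rpow_mul (by linarith)]
    _ ≤ B ^ n := by exact_mod_cast Real.rpow_le_rpow_of_exponent_le hB.le hsn
  rw [div_eq_mul_inv, ← mul_inv, one_div]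
  refine inv_strictAnti₀ (by positivity) ?_
  calc Q ^ μ = Q * Q ^ (μ - 1) := by
        rw [← Real.rpow_one_add' hQ.le (by linarith), add_sub_cancel]
    _ < Q * B ^ n := by gcongr
    _ = B ^ n * Q := mul_comm _ _

lemma Irrational.infinite_of_forall_exists_abs_sub_lt {ξ : ℝ} (hξ : Irrational ξ) {S : Set ℚ}
    (h : ∀ ε > 0, ∃ q ∈ S, |ξ - q| < ε) : S.Infinite := by
  intro hS
  obtain ⟨ε, hε, hball⟩ := Metric.isOpen_iff.mp
    (hS.image ((↑) : ℚ → ℝ)).isClosed.isOpen_compl ξ fun ⟨q, _, hq⟩ => hξ ⟨q, hq⟩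
  obtain ⟨q, hqS, hq⟩ := h ε hε
  exact hball (by rwa [Metric.mem_ball, Real.dist_eq, abs_sub_comm]) ⟨q, hqS, rfl⟩

lemma coe_div_sub_one_le {a : EReal} {R : ℝ} (hR : 1 < R)
    (h : ∀ μ : ℝ, 1 < μ → R < μ / (μ - 1) → (μ : EReal) ≤ a) :
    ((R / (R - 1) : ℝ) : EReal) ≤ a := by
  have h1 : (1 : EReal) < ((R / (R - 1) : ℝ) : EReal) := by
    exact_mod_cast (one_lt_div (by linarith)).mpr (by linarith : R - 1 < R)
  refine le_of_forall_lt_imp_le_of_dense fun z hz => ?_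
  obtain ⟨μ, hzμ, hμR⟩ := EReal.exists_between_coe_real (max_lt hz h1)
  have hμ : 1 < μ := by exact_mod_cast (le_max_right z 1).trans_lt hzμ
  refine (le_max_left z 1).trans (hzμ.le.trans (h μ hμ ?_))
  have hμR : μ * (R - 1) < R := by
    rwa [EReal.coe_lt_coe_iff, lt_div_iff₀ (by linarith)] at hμR
  exact (lt_div_iff₀ (by linarith)).mpr (by linarith)

namespace Real

variable {b : ℕ}

noncomputable def ofDigitsShift (a : ℕ → Fin b) (j : ℕ) : ℝ :=
  ofDigits fun i => a (i + j)

lemma ofDigitsShift_nonneg (a : ℕ → Fin b) (j : ℕ) : 0 ≤ ofDigitsShift a j :=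
  ofDigits_nonneg _

lemma ofDigits_lt_one {a : ℕ → Fin b} {i : ℕ} (hi : (a i : ℕ) + 1 < b) : ofDigits a < 1 := by
  have hb : 1 < b := by omega
  have hterm : ∀ k, ofDigitsTerm (fun _ => (⟨b - 1, by omega⟩ : Fin b)) k
      = ((b : ℝ) - 1) * ((b : ℝ) ^ (k + 1))⁻¹ := fun k => by
    simp [ofDigitsTerm, Nat.cast_sub hb.le]
  rw [← ofDigits_const_last_eq_one' hb]
  refine Summable.tsum_lt_tsum (i := i) (fun k => ?_) ?_ summable_ofDigitsTerm
    summable_ofDigitsTerm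
  · exact ofDigitsTerm_le.trans_eq (hterm k).symm
  · rw [hterm, ofDigitsTerm]
    gcongr
    have : ((a i : ℕ) : ℝ) + 1 < b := by exact_mod_cast hi
    linarith

lemma ofDigitsShift_lt_one {a : ℕ → Fin b} (ha : ¬ EventuallyPeriodic a) (j : ℕ) :
    ofDigitsShift a j < 1 := by
  suffices ∃ i, (a (i + j) : ℕ) + 1 < b from ofDigits_lt_one this.choose_spec
  by_contra! hmax
  refine ha ⟨1, one_pos, j, fun n hn => Fin.ext ?_⟩
  have h₁ := hmax (n - j)
  have h₂ := hmax (n + 1 - j)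
  rw [Nat.sub_add_cancel hn] at h₁
  rw [Nat.sub_add_cancel (by omega)] at h₂
  have := (a n).isLt
  have := (a (n + 1)).isLt
  omega

lemma natCast_mul_ofDigitsShift (a : ℕ → Fin b) (j : ℕ) :
    b * ofDigitsShift a j = a j + ofDigitsShift a (j + 1) := by
  have hb : (b : ℝ) ≠ 0 := by have := Fin.pos (a 0); positivity
  rw [ofDigitsShift, ofDigits_eq_sum_add_ofDigits _ 1]
  simp only [Finset.range_one, Finset.sum_singleton, ofDigitsTerm, zero_add, pow_one,
    ofDigitsShift, add_assoc, add_comm 1]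
  field_simp

lemma val_eq_floor_mul_ofDigitsShift {a : ℕ → Fin b} {j : ℕ}
    (h : ofDigitsShift a (j + 1) < 1) :
    (a j : ℕ) = ⌊b * ofDigitsShift a j⌋₊ := by
  rw [natCast_mul_ofDigitsShift, add_comm, Nat.floor_add_natCast (ofDigitsShift_nonneg a _),
    Nat.floor_eq_zero.mpr h, zero_add]

lemma exists_pow_mul_ofDigits_eq (a : ℕ → Fin b) (j : ℕ) :
    ∃ N : ℕ, (b : ℝ) ^ j * ofDigits a = N + ofDigitsShift a j := by
  induction j with
  | zero => exact ⟨0, by simp [ofDigitsShift]⟩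
  | succ j ih =>
    obtain ⟨N, hN⟩ := ih
    refine ⟨b * N + a j, ?_⟩
    rw [pow_succ', mul_assoc, hN, mul_add, natCast_mul_ofDigitsShift]
    push_cast
    ring

lemma ofDigitsShift_injective {a : ℕ → Fin b} (ha : ¬ EventuallyPeriodic a) :
    Function.Injective (ofDigitsShift a) := by
  have step : ∀ {j k}, ofDigitsShift a j = ofDigitsShift a k →
      a j = a k ∧ ofDigitsShift a (j + 1) = ofDigitsShift a (k + 1) := by
    intro j k h
    have hd : a j = a k := Fin.ext <| by
      rw [val_eq_floor_mul_ofDigitsShift (ofDigitsShift_lt_one ha _),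
        val_eq_floor_mul_ofDigitsShift (ofDigitsShift_lt_one ha _), h]
    have hj := natCast_mul_ofDigitsShift a j
    rw [h, natCast_mul_ofDigitsShift, hd] at hj
    exact ⟨hd, (add_left_cancel hj).symm⟩
  intro j k h
  by_contra hjk
  wlog hlt : j < k generalizing j k
  · exact this h.symm (Ne.symm hjk) (by omega)
  have hshift : ∀ i, ofDigitsShift a (j + i) = ofDigitsShift a (k + i) := by
    intro i
    induction i with
    | zero => exact h
    | succ i ih => exact (step ih).2
  refine ha ⟨k - j, by omega, j, fun n hn => ?_⟩
  have := (step (hshift (n - j))).1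
  rwa [Nat.add_sub_cancel' hn, show k + (n - j) = n + (k - j) by omega, eq_comm] at this

theorem irrational_ofDigits {a : ℕ → Fin b} (ha : ¬ EventuallyPeriodic a) :
    Irrational (ofDigits a) := by
  rintro ⟨r, hr⟩
  have hd : (0 : ℝ) < r.den := by exact_mod_cast r.pos
  have hmem : ∀ j, ofDigitsShift a j ∈ (fun z : ℤ => (z : ℝ) / r.den) '' Set.Ico 0 r.den := by
    intro j
    obtain ⟨N, hN⟩ := exists_pow_mul_ofDigits_eq a j
    set z : ℤ := r.num * b ^ j - r.den * N
    have hz : (z : ℝ) = r.den * ofDigitsShift a j := by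
      have : (r.den : ℝ) * r = r.num := by rw [Rat.cast_def]; field_simp
      simp only [z, Int.cast_sub, Int.cast_mul, Int.cast_pow, Int.cast_natCast, ← this]
      rw [← hr] at hN
      linear_combination (r.den : ℝ) * hN
    have h0 := mul_nonneg hd.le (ofDigitsShift_nonneg a j)
    have h1 := mul_lt_of_lt_one_right hd (ofDigitsShift_lt_one ha j)
    refine ⟨z, ⟨?_, ?_⟩, ?_⟩
    · exact_mod_cast hz ▸ h0
    · exact_mod_cast hz ▸ h1
    · change (z : ℝ) / r.den = _
      rw [hz]
      field_simp
  obtain ⟨j, k, hjk, h⟩ := ((Set.finite_Ico _ _).image _).exists_lt_map_eq_of_forall_mem hmem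
  exact hjk.ne (ofDigitsShift_injective ha h)

lemma exists_abs_ofDigits_sub_le {a : ℕ → Fin b} (hb : 1 < b) {j s n : ℕ} (hjs : j < s)
    (hrep : ∀ t < n, a (j + t) = a (s + t)) :
    ∃ p : ℤ, |ofDigits a - p / (b ^ s - b ^ j : ℕ)| ≤ ((b : ℝ) ^ n)⁻¹ / (b ^ s - b ^ j : ℕ) := by
  obtain ⟨Ns, hs⟩ := exists_pow_mul_ofDigits_eq a s
  obtain ⟨Nj, hj⟩ := exists_pow_mul_ofDigits_eq a j
  have hlt : b ^ j < b ^ s := Nat.pow_lt_pow_right hb hjs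
  have hQ : (0 : ℝ) < (b ^ s - b ^ j : ℕ) := by exact_mod_cast Nat.sub_pos_of_lt hlt
  refine ⟨Ns - Nj, ?_⟩
  have hdiff : ofDigits a - ((Ns - Nj : ℤ) : ℝ) / (b ^ s - b ^ j : ℕ)
      = (ofDigitsShift a s - ofDigitsShift a j) / (b ^ s - b ^ j : ℕ) := by
    rw [eq_div_iff hQ.ne', sub_mul, div_mul_cancel₀ _ hQ.ne', Nat.cast_sub hlt.le]
    push_cast
    linear_combination hs - hj
  rw [hdiff, abs_div, abs_of_pos hQ]
  gcongr
  exact abs_ofDigits_sub_ofDigits_le fun i hi => by rw [add_comm i s, add_comm i j, hrep i hi]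

lemma exists_rat_approx_of_rc {a : ℕ → Fin b} (hb : 1 < b) {n : ℕ} (hn : 0 < n) {μ : ℝ}
    (hμ : 1 < μ) (hrc : (rc n a : ℝ) / n < μ / (μ - 1)) :
    ∃ q : ℚ, |ofDigits a - q| < 1 / (q.den : ℝ) ^ μ ∧ |ofDigits a - q| ≤ ((b : ℝ) ^ n)⁻¹ := by
  obtain ⟨j, hjn, hrep⟩ := rc_spec a n
  obtain ⟨p, hp⟩ := exists_abs_ofDigits_sub_le hb (s := rc n a - n) (by omega) hrep
  set s := rc n a - n
  set Q := b ^ s - b ^ j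
  have hQ : 0 < Q := Nat.sub_pos_of_lt (Nat.pow_lt_pow_right hb (by omega))
  have hQs : (Q : ℝ) < (b : ℝ) ^ s := by exact_mod_cast Nat.sub_lt (by positivity) (by positivity)
  have hsn : (s : ℝ) * (μ - 1) ≤ n := by
    rw [div_lt_div_iff₀ (by positivity) (by linarith)] at hrc
    rw [Nat.cast_sub (by omega)]
    linarith
  refine ⟨p / Q, abs_sub_rat_lt_one_div_den_rpow (by linarith) hQ (hp.trans_lt ?_), ?_⟩
  · exact inv_pow_div_lt_one_div_rpow (by exact_mod_cast hb) (by positivity) hQs hμ hsn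
  · push_cast
    exact hp.trans (div_le_self (by positivity) (by exact_mod_cast hQ))

theorem coe_le_irrExp_ofDigits {a : ℕ → Fin b} (hb : 1 < b) (ha : ¬ EventuallyPeriodic a)
    {μ : ℝ} (hμ : 1 < μ) (hrep : repExp a < ((μ / (μ - 1) : ℝ) : EReal)) :
    (μ : EReal) ≤ irrExp (ofDigits a) := by
  refine le_sSup ⟨μ, (irrational_ofDigits ha).infinite_of_forall_exists_abs_sub_lt
    fun ε hε => ?_, rfl⟩
  have hb' : (1 : ℝ) < b := by exact_mod_cast hb
  obtain ⟨N, hN⟩ := exists_pow_lt_of_lt_one hε (inv_lt_one_of_one_lt₀ hb')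
  obtain ⟨n, hnN, hn⟩ := frequently_atTop.mp
    (frequently_lt_of_liminf_lt (by isBoundedDefault) hrep) (N + 1)
  obtain ⟨q, hq, hqn⟩ := exists_rat_approx_of_rc hb (n := n) (by omega) hμ (by exact_mod_cast hn)
  refine ⟨q, hq, hqn.trans_lt (lt_of_le_of_lt ?_ hN)⟩
  rw [← inv_pow]
  exact pow_le_pow_of_le_one (by positivity) (inv_le_one_of_one_le₀ hb'.le) (by omega)

end Real

theorem irrExp_ge_of_repExp (b : ℕ) (hb : 2 ≤ b) (x : ℕ → ℕ) (hdig : ∀ k, x k < b)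
    (hnp : ¬ EventuallyPeriodic x) :
    (repExp x = 1 → irrExp (∑' k : ℕ, (x k : ℝ) / (b : ℝ) ^ (k + 1)) = ⊤) ∧
    (1 < repExp x → repExp x < ⊤ →
      (((repExp x).toReal / ((repExp x).toReal - 1) : ℝ) : EReal) ≤
        irrExp (∑' k : ℕ, (x k : ℝ) / (b : ℝ) ^ (k + 1))) := by
  set a : ℕ → Fin b := fun k => ⟨x k, hdig k⟩
  have hξ : ∑' k : ℕ, (x k : ℝ) / (b : ℝ) ^ (k + 1) = Real.ofDigits a := by
    simp only [Real.ofDigits, Real.ofDigitsTerm, div_eq_mul_inv, a]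
  have ha : ¬ EventuallyPeriodic a := fun h => hnp (h.comp Fin.val)
  have key : ∀ μ : ℝ, 1 < μ → repExp x < ((μ / (μ - 1) : ℝ) : EReal) →
      (μ : EReal) ≤ irrExp (Real.ofDigits a) := fun μ hμ hrep =>
    Real.coe_le_irrExp_ofDigits hb ha hμ (repExp_comp_of_injective Fin.val_injective a ▸ hrep)
  rw [hξ]
  refine ⟨fun hrep => (EReal.eq_top_iff_forall_lt _).mpr fun y => ?_, fun hrep htop => ?_⟩
  · have hμ : 1 < max y 1 + 1 := by linarith [le_max_right y 1]
    refine (EReal.coe_lt_coe_iff.mpr ?_).trans_le (key _ hμ ?_)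
    · linarith [le_max_left y 1]
    · rw [hrep]
      exact_mod_cast (one_lt_div (by linarith)).mpr (by linarith)
  · obtain ⟨R, hR⟩ : ∃ R : ℝ, (R : EReal) = repExp x :=
      ⟨_, EReal.coe_toReal htop.ne (ne_bot_of_gt hrep)⟩
    rw [← hR] at hrep key ⊢
    rw [EReal.toReal_coe]
    exact coe_div_sub_one_le (by exact_mod_cast hrep) fun μ hμ hRμ =>
      key μ hμ (by exact_mod_cast hRμ)
end

section
/- Let U and V be nonempty finite words over an alphabet. If (UV)⁻ = (VU)⁻, where W⁻ denotes the word W deprived of its last letter, then there exist a finite word W and integers i, j ≥ 1 such that U = Wⁱ and V = Wʲ; in particular UV = VU and UV = W^{i+j}. -/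
/-!
Cancelling the last letters of `V` and `U`, the hypothesis reads `U ++ V⁻ = V ++ U⁻`. If
`|U| ≤ |V|` this forces `V = U ++ V'`, and `(U, V')` satisfies the same relation, so the pair
descends as in the Euclidean algorithm until both words are equal; that word is `W`.
-/

namespace List

variable {α : Type*}

theorem prefix_of_append_dropLast_eq {U V : List α} (h : U ++ V.dropLast = V ++ U.dropLast)
    (hle : U.length ≤ V.length) : U <+: V :=
  prefix_of_prefix_length_le (h ▸ prefix_append U _) (prefix_append V _) hle

theorem append_dropLast_eq_of_append_dropLast_eq_append {U V : List α} (hV : V ≠ [])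
    (h : U ++ (U ++ V).dropLast = U ++ V ++ U.dropLast) : U ++ V.dropLast = V ++ U.dropLast := by
  rw [dropLast_append_of_ne_nil hV, append_assoc] at h
  exact append_cancel_left h

theorem exists_eq_flatten_replicate_of_append_dropLast_eq {U V : List α} (hU : U ≠ [])
    (hV : V ≠ []) (h : U ++ V.dropLast = V ++ U.dropLast) :
    ∃ (W : List α) (i j : ℕ), 1 ≤ i ∧ 1 ≤ j ∧
      U = (replicate i W).flatten ∧ V = (replicate j W).flatten := by
  induction hn : U.length + V.length using Nat.strong_induction_on generalizing U V with
  | _ n ih =>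
  wlog hle : U.length ≤ V.length generalizing U V
  · obtain ⟨W, i, j, hi, hj, hV, hU⟩ := this hV hU h.symm (by omega) (by omega)
    exact ⟨W, j, i, hj, hi, hU, hV⟩
  obtain ⟨V', rfl⟩ := prefix_of_append_dropLast_eq h hle
  rcases eq_or_ne V' [] with rfl | hV'
  · exact ⟨U, 1, 1, le_rfl, le_rfl, by simp, by simp⟩
  have hlt : U.length + V'.length < n := by
    have := length_pos_iff.mpr hU
    simp only [length_append] at hn
    omega
  obtain ⟨W, i, j, hi, hj, rfl, rfl⟩ :=
    ih _ hlt hU hV' (append_dropLast_eq_of_append_dropLast_eq_append hV' h) rfl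
  exact ⟨W, i, i + j, hi, by omega, rfl, by rw [replicate_add, flatten_append]⟩

end List

open List in
theorem power_of_common_word_of_dropLast_eq {A : Type*} (U V : List A)
    (hU : U ≠ []) (hV : V ≠ []) (h : (U ++ V).dropLast = (V ++ U).dropLast) :
    ∃ (W : List A) (i j : ℕ), 1 ≤ i ∧ 1 ≤ j ∧
      U = (List.replicate i W).flatten ∧ V = (List.replicate j W).flatten ∧
      U ++ V = V ++ U ∧ U ++ V = (List.replicate (i + j) W).flatten := by
  rw [dropLast_append_of_ne_nil hV, dropLast_append_of_ne_nil hU] at h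
  obtain ⟨W, i, j, hi, hj, rfl, rfl⟩ := exists_eq_flatten_replicate_of_append_dropLast_eq hU hV h
  have hpow : (replicate i W).flatten ++ (replicate j W).flatten = (replicate (i + j) W).flatten := by
    rw [← flatten_append, ← replicate_add]
  refine ⟨W, i, j, hi, hj, rfl, rfl, ?_, hpow⟩
  rw [hpow, ← flatten_append, ← replicate_add, Nat.add_comm]
end

section
/- Let x be an infinite word over a finite alphabet and n ≥ 2 an integer such that r(n,x) ≥ r(n−1,x) + 2. Then r(n,x) ≥ 2n + 1. -/
open Filter

namespace RcAux

variable {A : Type*}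

/-- `x` restricted to the window `[lo, lo + L)` has period `p`. -/
def Per (x : ℕ → A) (lo L p : ℕ) : Prop :=
  ∀ i, i + p < L → x (lo + i) = x (lo + (i + p))

lemma per_chain {x : ℕ → A} {lo L g : ℕ} (h : Per x lo L g) :
    ∀ k i, i + k * g < L → x (lo + i) = x (lo + (i + k * g)) := by
  intro k
  induction k with
  | zero => intro i _; norm_num
  | succ k ih =>
    intro i hi
    have hkey : (i + g) + k * g = i + (k + 1) * g := by ring
    have h1 : x (lo + i) = x (lo + (i + g)) := h i (by omega)
    have h2 : x (lo + (i + g)) = x (lo + ((i + g) + k * g)) := ih (i + g) (by omega)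
    rw [h1, h2]
    congr 1
    omega

lemma per_congr {x : ℕ → A} {lo L g : ℕ} (h : Per x lo L g) {i1 i2 : ℕ}
    (h12 : i1 ≤ i2) (h2 : i2 < L) (hdvd : g ∣ i2 - i1) :
    x (lo + i1) = x (lo + i2) := by
  obtain ⟨k, hk⟩ := hdvd
  rw [Nat.mul_comm] at hk
  have h3 := per_chain h k i1 (by omega)
  rw [h3]
  congr 1
  omega

lemma per_ext {x : ℕ → A} {lo L p g : ℕ} (hg : 0 < g) (hp : 0 < p) (hgp : g ∣ p)
    (hL : 2 * p ≤ L) (hPp : Per x lo L p) (hin : Per x lo (L - p) g) :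
    Per x lo L g := by
  have hgle : g ≤ p := Nat.le_of_dvd hp hgp
  intro i hi
  by_cases h1 : i + g < L - p
  · exact hin i h1
  · by_cases h2 : p ≤ i
    · have e1 : x (lo + (i - p)) = x (lo + i) := by
        have := hPp (i - p) (by omega)
        rw [this]; congr 1; omega
      have e2 : x (lo + (i + g - p)) = x (lo + (i + g)) := by
        have := hPp (i + g - p) (by omega)
        rw [this]; congr 1; omega
      have e3 : x (lo + (i - p)) = x (lo + (i + g - p)) := by
        have := hin (i - p) (by omega)
        rw [this]; congr 1; omega
      rw [← e1, e3, e2]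
    · push_neg at h2
      have e2 : x (lo + (i + g - p)) = x (lo + (i + g)) := by
        have := hPp (i + g - p) (by omega)
        rw [this]; congr 1; omega
      have e4 : x (lo + (i + g - p)) = x (lo + i) := by
        refine per_congr hin (by omega) (by omega) ?_
        have h5 : i - (i + g - p) = p - g := by omega
        rw [h5]
        exact Nat.dvd_sub hgp dvd_rfl
      rw [← e4, e2]

/-- Fine–Wilf theorem, fuelled version. -/
lemma fw {x : ℕ → A} (lo : ℕ) :
    ∀ N p q L, p + q ≤ N → 0 < p → 0 < q → p + q - Nat.gcd p q ≤ L →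
      Per x lo L p → Per x lo L q → Per x lo L (Nat.gcd p q) := by
  intro N
  induction N with
  | zero =>
    intro p q L hN hp _ _ _ _
    simp only [Nat.le_zero] at hN
    omega
  | succ N ih =>
    intro p q L hN hp hq hL hPp hPq
    rcases lt_trichotomy p q with hlt | heq | hgt
    · have hgeq : Nat.gcd p (q - p) = Nat.gcd p q := by
        conv_rhs => rw [show q = q - p + p by omega]
        rw [Nat.gcd_add_self_right]
      have hgp : Nat.gcd p q ∣ p := Nat.gcd_dvd_left p q
      have hgq : Nat.gcd p q ∣ q := Nat.gcd_dvd_right p q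
      have hg1 : 0 < Nat.gcd p q := Nat.gcd_pos_of_pos_left q hp
      have hgle : Nat.gcd p q ≤ p := Nat.le_of_dvd hp hgp
      have hqpg : Nat.gcd p q ≤ q - p := Nat.le_of_dvd (by omega) (Nat.dvd_sub hgq hgp)
      have P1 : Per x lo (L - p) p := fun i hi => hPp i (by omega)
      have P2 : Per x lo (L - p) (q - p) := by
        intro i hi
        have e1 := hPq i (by omega)
        have e2 := hPp (i + (q - p)) (by omega)
        rw [e1, e2]
        congr 1
        omega
      have hrec := ih p (q - p) (L - p) (by omega) hp (by omega)
        (by rw [hgeq]; omega) P1 P2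
      rw [hgeq] at hrec
      exact per_ext hg1 hp hgp (by omega) hPp hrec
    · subst heq
      rw [Nat.gcd_self]
      exact hPp
    · rw [Nat.gcd_comm]
      have hgeq : Nat.gcd q (p - q) = Nat.gcd q p := by
        conv_rhs => rw [show p = p - q + q by omega]
        rw [Nat.gcd_add_self_right]
      have hgp : Nat.gcd q p ∣ q := Nat.gcd_dvd_left q p
      have hgq : Nat.gcd q p ∣ p := Nat.gcd_dvd_right q p
      have hg1 : 0 < Nat.gcd q p := Nat.gcd_pos_of_pos_left p hq
      have hgle : Nat.gcd q p ≤ q := Nat.le_of_dvd hq hgp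
      have hqpg : Nat.gcd q p ≤ p - q := Nat.le_of_dvd (by omega) (Nat.dvd_sub hgq hgp)
      have hcomm : Nat.gcd q p = Nat.gcd p q := Nat.gcd_comm q p
      have P1 : Per x lo (L - q) q := fun i hi => hPq i (by omega)
      have P2 : Per x lo (L - q) (p - q) := by
        intro i hi
        have e1 := hPp i (by omega)
        have e2 := hPq (i + (p - q)) (by omega)
        rw [e1, e2]
        congr 1
        omega
      have hrec := ih q (p - q) (L - q) (by omega) hq (by omega)
        (by rw [hgeq]; omega) P1 P2
      rw [hgeq] at hrec
      exact per_ext hg1 hq hgp (by omega) hPq hrec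

/-- The combinatorial core of the theorem. -/
lemma key (x : ℕ → A) (n1 m m' j a : ℕ)
    (hn1 : 1 ≤ n1)
    (hjn : j + (n1 + 1) < m)
    (hper : ∀ t < n1 + 1, x (j + t) = x (m - (n1 + 1) + t))
    (han : a + n1 < m')
    (hpera : ∀ t < n1, x (a + t) = x (m' - n1 + t))
    (hh : m' + 2 ≤ m)
    (hcon : m ≤ 2 * n1 + 2)
    (hminS : ∀ k, k < m →
      ¬ (∃ j', j' + (n1 + 1) < k ∧ ∀ t < n1 + 1, x (j' + t) = x (k - (n1 + 1) + t))) :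
    False := by
  obtain ⟨M, hM⟩ : ∃ M, M + (n1 + 1) = m := ⟨m - (n1 + 1), by omega⟩
  obtain ⟨d, hd, hd1⟩ : ∃ d, j + d = M ∧ 1 ≤ d := ⟨M - j, by omega, by omega⟩
  obtain ⟨b, hb⟩ : ∃ b, b + n1 = m' := ⟨m' - n1, by omega⟩
  obtain ⟨s, hs, hs1⟩ : ∃ s, a + s = b ∧ 1 ≤ s := ⟨b - a, by omega, by omega⟩
  have hper' : ∀ t < n1 + 1, x (j + t) = x (M + t) := by
    intro t ht
    have := hper t ht
    rwa [show m - (n1 + 1) = M by omega] at this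
  have hpera' : ∀ t < n1, x (a + t) = x (b + t) := by
    intro t ht
    have := hpera t ht
    rwa [show m' - n1 = b by omega] at this
  -- the extension of the repeated (n1)-word by one letter must fail
  have hE : x (a + n1) ≠ x (b + n1) := by
    intro heq
    refine hminS (m' + 1) (by omega) ⟨a, by omega, ?_⟩
    intro t ht
    rw [show m' + 1 - (n1 + 1) = b by omega]
    rcases Nat.lt_or_ge t n1 with h' | h'
    · exact hpera' t h'
    · rw [show t = n1 by omega]
      exact heq
  -- the common window
  set lo := max a j with hlo
  have hloa : a ≤ lo := le_max_left a j
  have hloj : j ≤ lo := le_max_right a j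
  have hlom : lo ≤ m' := max_le (by omega) (by omega)
  obtain ⟨L, hLdef⟩ : ∃ L, lo + L = m' := ⟨m' - lo, by omega⟩
  have hPs : Per x lo L s := by
    intro i hi
    have ht : lo + i = a + (lo + i - a) := by omega
    have ht2 : lo + (i + s) = b + (lo + i - a) := by omega
    rw [ht, ht2]
    exact hpera' (lo + i - a) (by omega)
  have hPd : Per x lo L d := by
    intro i hi
    have ht : lo + i = j + (lo + i - j) := by omega
    have ht2 : lo + (i + d) = M + (lo + i - j) := by omega
    rw [ht, ht2]
    exact hper' (lo + i - j) (by omega)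
  have hg1 : 0 < Nat.gcd s d := Nat.gcd_pos_of_pos_left d hs1
  have hgs : Nat.gcd s d ∣ s := Nat.gcd_dvd_left s d
  have hgd : Nat.gcd s d ∣ d := Nat.gcd_dvd_right s d
  have hlen : s + d - Nat.gcd s d ≤ L := by
    rcases le_total a j with hab | hab
    · have hloval : lo = j := by rw [hlo]; exact max_eq_right hab
      omega
    · have hloval : lo = a := by rw [hlo]; exact max_eq_left hab
      omega
  have hPG : Per x lo L (Nat.gcd s d) := fw lo (s + d) s d L le_rfl hs1 hd1 hlen hPs hPd
  -- the last letter of the second occurrence can be pushed back by d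
  have hK : x (m' - d) = x m' := by
    have := hper' (m' - M) (by omega)
    rwa [show j + (m' - M) = m' - d by omega, show M + (m' - M) = m' by omega] at this
  have hlo1 : lo ≤ m' - d := max_le (by omega) (by omega)
  have hlo2 : lo ≤ a + n1 := max_le (by omega) (by omega)
  -- connect x (m' - d) and x (a + n1) = x (m' - s) through the gcd-period
  have hfin : x (m' - d) = x (a + n1) := by
    rcases le_total (m' - d) (a + n1) with hcmp | hcmp
    · have hcg := per_congr hPG (i1 := m' - d - lo) (i2 := a + n1 - lo)
        (by omega) (by omega)
        (by rw [show a + n1 - lo - (m' - d - lo) = d - s by omega]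
            exact Nat.dvd_sub hgd hgs)
      rwa [show lo + (m' - d - lo) = m' - d by omega,
        show lo + (a + n1 - lo) = a + n1 by omega] at hcg
    · have hcg := per_congr hPG (i1 := a + n1 - lo) (i2 := m' - d - lo)
        (by omega) (by omega)
        (by rw [show m' - d - lo - (a + n1 - lo) = s - d by omega]
            exact Nat.dvd_sub hgs hgd)
      rw [show lo + (m' - d - lo) = m' - d by omega,
        show lo + (a + n1 - lo) = a + n1 by omega] at hcg
      exact hcg.symm
  apply hE
  rw [← hfin, hK, show m' = b + n1 by omega]

end RcAux

theorem rc_ge_of_jump {A : Type*} [Fintype A] (x : ℕ → A) (n : ℕ) (hn : 2 ≤ n)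
    (h : rc (n - 1) x + 2 ≤ rc n x) : 2 * n + 1 ≤ rc n x := by
  by_contra hcon
  push_neg at hcon
  obtain ⟨n1, rfl⟩ : ∃ k, n = k + 1 := ⟨n - 1, by omega⟩
  simp only [Nat.add_sub_cancel] at h
  have hn1 : 1 ≤ n1 := by omega
  have hrc : rc (n1 + 1) x =
      sInf {k : ℕ | ∃ j, j + (n1 + 1) < k ∧ ∀ t < n1 + 1, x (j + t) = x (k - (n1 + 1) + t)} :=
    rfl
  have hrc' : rc n1 x =
      sInf {k : ℕ | ∃ j, j + n1 < k ∧ ∀ t < n1, x (j + t) = x (k - n1 + t)} :=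
    rfl
  -- the set for length n1 + 1 is nonempty
  have hSne : {k : ℕ | ∃ j, j + (n1 + 1) < k ∧
      ∀ t < n1 + 1, x (j + t) = x (k - (n1 + 1) + t)}.Nonempty := by
    by_contra hem
    rw [Set.not_nonempty_iff_eq_empty] at hem
    have h0 : rc (n1 + 1) x = 0 := by rw [hrc, hem, Nat.sInf_empty]
    omega
  have hmemS := Nat.sInf_mem hSne
  rw [← hrc] at hmemS
  obtain ⟨j, hjn, hper⟩ := hmemS
  have hminS : ∀ k, k < rc (n1 + 1) x →
      ¬ (∃ j', j' + (n1 + 1) < k ∧ ∀ t < n1 + 1, x (j' + t) = x (k - (n1 + 1) + t)) := by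
    intro k hk hkmem
    have hle : rc (n1 + 1) x ≤ k := by
      rw [hrc]
      exact Nat.sInf_le hkmem
    omega
  -- the set for length n1 is nonempty : it contains rc (n1+1) x - 1
  have hm1T : (rc (n1 + 1) x - 1) ∈
      {k : ℕ | ∃ j', j' + n1 < k ∧ ∀ t < n1, x (j' + t) = x (k - n1 + t)} := by
    refine ⟨j, by omega, ?_⟩
    intro t ht
    rw [show rc (n1 + 1) x - 1 - n1 = rc (n1 + 1) x - (n1 + 1) by omega]
    exact hper t (by omega)
  have hTne : {k : ℕ | ∃ j', j' + n1 < k ∧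
      ∀ t < n1, x (j' + t) = x (k - n1 + t)}.Nonempty := ⟨_, hm1T⟩
  have hmemT := Nat.sInf_mem hTne
  rw [← hrc'] at hmemT
  obtain ⟨a, han, hpera⟩ := hmemT
  exact RcAux.key x n1 (rc (n1 + 1) x) (rc n1 x) j a hn1 hjn hper han hpera
    (by omega) (by omega) hminS
end

section
/- Let U = u₁u₂…u_n be a finite word over an alphabet and let λ ∈ Λ(U), where Λ(U) = { 1 ≤ k < n : u_i = u_{i+k} for all 1 ≤ i ≤ n−k }. Then for any letter a with a ≠ u_{n−λ+1}, the word u_{n−λ+2} u_{n−λ+3} … u_n a is not a factor of U. -/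
theorem not_factor_of_period {A : Type*} (L : List A) (lam : ℕ)
    (h1 : 1 ≤ lam) (h2 : lam < L.length)
    (hper : ∀ i, i + lam < L.length → L[i]? = L[i + lam]?)
    (a : A) (ha : L[L.length - lam]? ≠ some a) :
    ¬ (L.drop (L.length - lam + 1) ++ [a]) <:+: L := by
  intro h
  set n := L.length with hn
  haveI : NeZero lam := ⟨by omega⟩
  obtain ⟨s, t, hst⟩ := h
  set p := s.length with hp
  -- length facts
  have hdlen : (L.drop (n - lam + 1)).length = lam - 1 := by
    simp [hn]; omega
  have hWlen : (L.drop (n - lam + 1) ++ [a]).length = lam := by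
    simp [hdlen]; omega
  have hpn : p + lam ≤ n := by
    have := congrArg List.length hst
    simp [hWlen] at this
    omega
  -- occurrences
  have hidx : ∀ i, i < lam → L[p + i]? = (L.drop (n - lam + 1) ++ [a])[i]? := by
    intro i hi
    conv_lhs => rw [← hst]
    rw [List.append_assoc, List.getElem?_append_right (by omega : s.length ≤ p + i)]
    rw [List.getElem?_append]
    simp only [hWlen, hp]
    rw [if_pos (by omega)]
    congr 1
    omega
  have hmid : ∀ i, i < lam - 1 → L[p + i]? = L[n - lam + 1 + i]? := by
    intro i hi
    rw [hidx i (by omega), List.getElem?_append, if_pos (by rw [hdlen]; omega),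
      List.getElem?_drop]
  have hlast : L[p + (lam - 1)]? = some a := by
    rw [hidx (lam - 1) (by omega), List.getElem?_append_right (by rw [hdlen]),
      hdlen]
    simp
  -- periodicity up to multiples
  have keyA : ∀ j k, j + lam * k < n → L[j]? = L[j + lam * k]? := by
    intro j k
    induction k with
    | zero => simp
    | succ k ih =>
      intro hk
      have hmul : lam * (k + 1) = lam * k + lam := by ring
      have h1' : j + lam * k < n := by omega
      rw [ih h1']
      have := hper (j + lam * k) (by omega)
      rw [this]
      congr 1
      omega
  have key : ∀ j j', j < n → j' < n → (j : ZMod lam) = (j' : ZMod lam) →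
      L[j]? = L[j']? := by
    have base : ∀ j j', j ≤ j' → j < n → j' < n → (j : ZMod lam) = (j' : ZMod lam) →
        L[j]? = L[j']? := by
      intro j j' hle hjn hj'n hcast
      have hmod : j ≡ j' [MOD lam] := (ZMod.natCast_eq_natCast_iff _ _ _).mp hcast
      obtain ⟨k, hk⟩ := (Nat.modEq_iff_dvd' hle).mp hmod
      have hj' : j' = j + lam * k := by omega
      rw [hj']
      exact keyA j k (by omega)
    intro j j' hjn hj'n hcast
    rcases le_total j j' with hle | hle
    · exact base j j' hle hjn hj'n hcast
    · exact (base j' j hle hj'n hjn hcast.symm).symm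
  -- the periodic function on residues
  set rep : ZMod lam → ℕ := fun x => x.val + lam * ((n - 1 - x.val) / lam) with hrep
  set G : ZMod lam → Option A := fun x => L[rep x]? with hG
  have hrep_lt : ∀ x : ZMod lam, rep x < n := by
    intro x
    have hv : x.val < lam := ZMod.val_lt x
    have hdiv : lam * ((n - 1 - x.val) / lam) ≤ n - 1 - x.val := Nat.mul_div_le _ _
    simp only [hrep]
    omega
  have hrep_cast : ∀ x : ZMod lam, ((rep x : ℕ) : ZMod lam) = x := by
    intro x
    simp only [hrep]
    push_cast
    simp [ZMod.natCast_val, ZMod.cast_id]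
  have P1 : ∀ j, j < n → G ((j : ℕ) : ZMod lam) = L[j]? := by
    intro j hj
    exact key (rep ((j : ℕ) : ZMod lam)) j (hrep_lt _) hj (by rw [hrep_cast])
  set d : ZMod lam := (p : ZMod lam) - ((n + 1 : ℕ) : ZMod lam) with hd
  -- fact (1)
  have fact1 : ∀ x : ZMod lam, x ≠ ((n : ℕ) : ZMod lam) → G (x + d) = G x := by
    intro x hx
    set i : ℕ := (x - ((n + 1 : ℕ) : ZMod lam)).val with hi
    have hiv : i < lam := ZMod.val_lt _
    have hxi : x = ((n + 1 : ℕ) : ZMod lam) + (i : ZMod lam) := by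
      have : ((i : ℕ) : ZMod lam) = x - ((n + 1 : ℕ) : ZMod lam) := by
        simp [hi, ZMod.natCast_val, ZMod.cast_id]
      rw [this]; ring
    have hine : i ≠ lam - 1 := by
      intro hcon
      apply hx
      rw [hxi, hcon]
      have : ((n + 1 : ℕ) : ZMod lam) + ((lam - 1 : ℕ) : ZMod lam)
          = ((n + 1 + (lam - 1) : ℕ) : ZMod lam) := by push_cast; ring
      rw [this]
      have h2' : n + 1 + (lam - 1) = n + lam := by omega
      rw [h2']
      push_cast
      simp
    have hilt : i < lam - 1 := by omega
    have hx1 : x + d = ((p + i : ℕ) : ZMod lam) := by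
      rw [hxi, hd]; push_cast; ring
    have hx2 : x = ((n - lam + 1 + i : ℕ) : ZMod lam) := by
      rw [hxi]
      have : ((n - lam + 1 + i + lam : ℕ) : ZMod lam) = ((n - lam + 1 + i : ℕ) : ZMod lam) := by
        push_cast; simp
      rw [← this]
      have h2' : n - lam + 1 + i + lam = n + 1 + i := by omega
      rw [h2']; push_cast; ring
    rw [hx1, hx2, P1 (p + i) (by omega), P1 (n - lam + 1 + i) (by omega)]
    exact hmid i hilt
  -- fact (2)
  have fact2 : G (((n : ℕ) : ZMod lam) + d) = some a := by
    have key_eq : ((p + (lam - 1) : ℕ) : ZMod lam) + ((n + 1 : ℕ) : ZMod lam)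
        = ((n : ℕ) : ZMod lam) + (p : ZMod lam) := by
      rw [← Nat.cast_add]
      have h2' : p + (lam - 1) + (n + 1) = n + p + lam := by omega
      rw [h2']
      push_cast
      simp
    have hcast : ((n : ℕ) : ZMod lam) + d = ((p + (lam - 1) : ℕ) : ZMod lam) := by
      rw [hd]
      linear_combination (-1 : ZMod lam) * key_eq
    rw [hcast, P1 (p + (lam - 1)) (by omega)]
    exact hlast
  -- fact (3)
  have fact3 : G ((n : ℕ) : ZMod lam) ≠ some a := by
    have hcast : ((n : ℕ) : ZMod lam) = ((n - lam : ℕ) : ZMod lam) := by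
      have h2' : n = (n - lam) + lam := by omega
      rw [h2']; push_cast; simp
    rw [hcast, P1 (n - lam) (by omega)]
    exact ha
  -- iterate fact1
  have horder : 0 < addOrderOf d := addOrderOf_pos d
  have hiter : ∀ j, 1 ≤ j → j ≤ addOrderOf d → G (((n : ℕ) : ZMod lam) + j • d) = some a := by
    intro j
    induction j with
    | zero => omega
    | succ j ih =>
      intro _ hle
      rcases Nat.eq_zero_or_pos j with hj0 | hj0
      · subst hj0; simpa using fact2
      · have hjd : j • d ≠ 0 := nsmul_ne_zero_of_lt_addOrderOf (by omega) (by omega)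
        have hne : ((n : ℕ) : ZMod lam) + j • d ≠ ((n : ℕ) : ZMod lam) := by
          intro hcon
          exact hjd (by linear_combination hcon)
        have : G (((n : ℕ) : ZMod lam) + (j + 1) • d)
            = G (((n : ℕ) : ZMod lam) + j • d) := by
          rw [succ_nsmul, ← add_assoc]
          exact fact1 _ hne
        rw [this]
        exact ih hj0 (by omega)
  have := hiter (addOrderOf d) horder le_rfl
  rw [addOrderOf_nsmul_eq_zero d, add_zero] at this
  exact fact3 this
end
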